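/- arXiv:1109.5996 — 6 statements merged into one kernel-verified Lean document; each statement's English description precedes it below -/
import Mathlib

section
/- Let 𝒜 be a pattern of size (i,m) (an m-tuple of i-element subsets of {1,...,m} such that each element of {1,...,m} occurs in exactly i of the sets) and ℬ a pattern of size (i,m'). If the number of column-even Latin rectangles with pattern 𝒜 differs from the number of column-odd ones, and the same holds for ℬ, then the number of column-even Latin rectangles with the concatenated pattern (𝒜, ℬ+m) differs from the number of column-odd ones. -/
open Finset

/-- A Latin `(i,m)`-rectangle. -/
def IsLatinRect {i m : ℕ} (A : Fin i → Fin m → Fin m) : Prop :=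
  (∀ p, Function.Bijective (A p)) ∧ ∀ q, Function.Injective fun p => A p q

/-- The column sign `ε_c(A)`. -/
def colSign {i m : ℕ} (A : Fin i → Fin m → Fin m) : ℤ :=
  ∏ q : Fin m, Int.sign (∏ p : Fin i, ∏ p' ∈ Finset.univ.filter (fun p' => p < p'),
    (((A p' q : ℕ) : ℤ) - ((A p q : ℕ) : ℤ)))

/-- The pattern of a rectangle: the tuple of underlying sets of its columns. -/
def patternOf {i m : ℕ} (A : Fin i → Fin m → Fin m) : Fin m → Finset (Fin m) :=
  fun q => Finset.image (fun p => A p q) Finset.univ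

/-- A pattern of size `(i,m)`: an `m`-tuple of `i`-element subsets of `Fin m` such that
each element of `Fin m` occurs in exactly `i` of the sets. -/
def IsPattern (i : ℕ) {m : ℕ} (P : Fin m → Finset (Fin m)) : Prop :=
  (∀ q, (P q).card = i) ∧ ∀ x : Fin m, (Finset.univ.filter fun q => x ∈ P q).card = i

/-- The number of column-even Latin rectangles with pattern `P`. -/
noncomputable def Lpos (i : ℕ) {m : ℕ} (P : Fin m → Finset (Fin m)) : ℕ :=
  Nat.card {A : Fin i → Fin m → Fin m // IsLatinRect A ∧ patternOf A = P ∧ colSign A = 1}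

/-- The number of column-odd Latin rectangles with pattern `P`. -/
noncomputable def Lneg (i : ℕ) {m : ℕ} (P : Fin m → Finset (Fin m)) : ℕ :=
  Nat.card {A : Fin i → Fin m → Fin m // IsLatinRect A ∧ patternOf A = P ∧ colSign A = -1}

/-- The concatenated pattern `(𝒜, ℬ + m)` of size `(i, m + m')`. -/
def concatPattern {m m' : ℕ} (P : Fin m → Finset (Fin m)) (P' : Fin m' → Finset (Fin m')) :
    Fin (m + m') → Finset (Fin (m + m')) :=
  Fin.append (fun q => (P q).image (Fin.castAdd m')) (fun q => (P' q).image (Fin.natAdd m))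

/-! The map `(A, B) ↦ (A | B + m)`, placing `B + m` to the right of `A`, is a bijection from pairs
of Latin rectangles with patterns `𝒜` and `ℬ` onto the Latin rectangles with pattern `(𝒜, ℬ + m)`:
the pattern forces the first `m` columns to use only the symbols `< m`, and the others only the
symbols `≥ m`. It multiplies column signs, since shifting a column by `m` leaves its differences
unchanged. Hence `∑ ε_c` over the Latin rectangles with a given pattern, which is `|L⁺| - |L⁻|`,
is multiplicative under concatenation, and a product of two nonzero integers is nonzero. -/

theorem colSign_eq_one_or_neg_one {i m : ℕ} {A : Fin i → Fin m → Fin m}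
    (hA : ∀ q, Function.Injective fun p => A p q) : colSign A = 1 ∨ colSign A = -1 := by
  rw [← Int.isUnit_iff, colSign, IsUnit.prod_univ_iff]
  intro q
  have hne : ∏ p : Fin i, ∏ p' ∈ univ.filter (fun p' => p < p'),
      (((A p' q : ℕ) : ℤ) - ((A p q : ℕ) : ℤ)) ≠ 0 := by
    refine prod_ne_zero_iff.mpr fun p _ => prod_ne_zero_iff.mpr fun p' hp' => ?_
    have hlt : p < p' := (mem_filter.mp hp').2
    rw [sub_ne_zero, Ne, Nat.cast_inj, Fin.val_inj]
    exact fun h => hlt.ne' (hA q h)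
  rw [Int.isUnit_iff]
  rcases hne.lt_or_gt with h | h
  · exact Or.inr (Int.sign_eq_neg_one_of_neg h)
  · exact Or.inl (Int.sign_eq_one_of_pos h)

theorem Finset.sum_eq_card_filter_sub_card_filter {α : Type*} {s : Finset α} {f : α → ℤ}
    (hf : ∀ a ∈ s, f a = 1 ∨ f a = -1) :
    ∑ a ∈ s, f a = #{a ∈ s | f a = 1} - #{a ∈ s | f a = -1} := by
  classical
  rw [natCast_card_filter, natCast_card_filter, ← sum_sub_distrib]
  refine sum_congr rfl fun a ha => ?_
  rcases hf a ha with h | h <;> simp [h]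

section LatinRects

variable (i : ℕ) {m : ℕ}

open Classical in
noncomputable def latinRects (P : Fin m → Finset (Fin m)) : Finset (Fin i → Fin m → Fin m) :=
  univ.filter fun A => IsLatinRect A ∧ patternOf A = P

variable {i}

theorem mem_latinRects {P : Fin m → Finset (Fin m)} {A : Fin i → Fin m → Fin m} :
    A ∈ latinRects i P ↔ IsLatinRect A ∧ patternOf A = P := by
  simp [latinRects]

theorem natCard_latinRect_eq_card_filter (P : Fin m → Finset (Fin m))
    (r : (Fin i → Fin m → Fin m) → Prop) [DecidablePred r] :
    Nat.card {A : Fin i → Fin m → Fin m // IsLatinRect A ∧ patternOf A = P ∧ r A} =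
      #{A ∈ latinRects i P | r A} := by
  classical
  rw [Nat.card_eq_fintype_card, Fintype.card_subtype]
  congr 1
  ext A
  simp [latinRects, and_assoc]

theorem Lpos_sub_Lneg_eq_sum_colSign (P : Fin m → Finset (Fin m)) :
    (Lpos i P : ℤ) - Lneg i P = ∑ A ∈ latinRects i P, colSign A := by
  rw [Finset.sum_eq_card_filter_sub_card_filter fun A hA =>
    colSign_eq_one_or_neg_one (mem_latinRects.mp hA).1.2, Lpos, Lneg,
    natCard_latinRect_eq_card_filter, natCard_latinRect_eq_card_filter]

end LatinRects

section RectAppend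

variable {i m m' : ℕ}

def rectAppend (A : Fin i → Fin m → Fin m) (B : Fin i → Fin m' → Fin m') :
    Fin i → Fin (m + m') → Fin (m + m') :=
  fun p => Fin.append (Fin.castAdd m' ∘ A p) (Fin.natAdd m ∘ B p)

variable {A : Fin i → Fin m → Fin m} {B : Fin i → Fin m' → Fin m'}

@[simp]
theorem rectAppend_castAdd (p : Fin i) (q : Fin m) :
    rectAppend A B p (Fin.castAdd m' q) = Fin.castAdd m' (A p q) := by
  simp [rectAppend]

@[simp]
theorem rectAppend_natAdd (p : Fin i) (q : Fin m') :
    rectAppend A B p (Fin.natAdd m q) = Fin.natAdd m (B p q) := by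
  simp [rectAppend]

theorem rectAppend_row (p : Fin i) :
    rectAppend A B p = finSumFinEquiv ∘ Sum.map (A p) (B p) ∘ finSumFinEquiv.symm := by
  funext q
  refine Fin.addCases (fun q => ?_) (fun q => ?_) q <;> simp

theorem rectAppend_inj {A' : Fin i → Fin m → Fin m} {B' : Fin i → Fin m' → Fin m'} :
    rectAppend A B = rectAppend A' B' ↔ A = A' ∧ B = B' := by
  refine ⟨fun h => ⟨?_, ?_⟩, fun h => h.1 ▸ h.2 ▸ rfl⟩ <;> funext p q
  · simpa using congrFun (congrFun h p) (Fin.castAdd m' q)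
  · simpa using congrFun (congrFun h p) (Fin.natAdd m q)

theorem isLatinRect_rectAppend_iff :
    IsLatinRect (rectAppend A B) ↔ IsLatinRect A ∧ IsLatinRect B := by
  have hrows : (∀ p, Function.Bijective (rectAppend A B p)) ↔
      (∀ p, Function.Bijective (A p)) ∧ ∀ p, Function.Bijective (B p) := by
    simp only [rectAppend_row, Equiv.comp_bijective, Equiv.bijective_comp, Sum.map_bijective,
      forall_and]
  have hleft (q : Fin m) : (fun p => rectAppend A B p (Fin.castAdd m' q)) =
      Fin.castAdd m' ∘ fun p => A p q := by
    funext p; simp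
  have hright (q : Fin m') : (fun p => rectAppend A B p (Fin.natAdd m q)) =
      Fin.natAdd m ∘ fun p => B p q := by
    funext p; simp
  have hcols : (∀ q, Function.Injective fun p => rectAppend A B p q) ↔
      (∀ q, Function.Injective fun p => A p q) ∧ ∀ q, Function.Injective fun p => B p q := by
    rw [Fin.forall_fin_add]
    simp only [hleft, hright, (Fin.castAdd_injective m m').of_comp_iff,
      (Fin.natAdd_injective m' m).of_comp_iff]
  rw [IsLatinRect, IsLatinRect, IsLatinRect, hrows, hcols]
  tauto

theorem patternOf_rectAppend :
    patternOf (rectAppend A B) = concatPattern (patternOf A) (patternOf B) := by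
  funext q
  refine Fin.addCases (fun q => ?_) (fun q => ?_) q <;>
    simp [patternOf, concatPattern, image_image, Function.comp_def]

theorem concatPattern_inj {P Q : Fin m → Finset (Fin m)} {P' Q' : Fin m' → Finset (Fin m')} :
    concatPattern P P' = concatPattern Q Q' ↔ P = Q ∧ P' = Q' := by
  refine ⟨fun h => ⟨funext fun q => ?_, funext fun q => ?_⟩, fun h => h.1 ▸ h.2 ▸ rfl⟩
  · exact image_injective (Fin.castAdd_injective m m') <| by
      simpa [concatPattern] using congrFun h (Fin.castAdd m' q)
  · exact image_injective (Fin.natAdd_injective m' m) <| by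
      simpa [concatPattern] using congrFun h (Fin.natAdd m q)

theorem colSign_rectAppend : colSign (rectAppend A B) = colSign A * colSign B := by
  simp only [colSign, Fin.prod_univ_add, rectAppend_castAdd, rectAppend_natAdd, Fin.val_castAdd,
    Fin.val_natAdd, Nat.cast_add, add_sub_add_left_eq_sub]

theorem exists_rectAppend_eq {C : Fin i → Fin (m + m') → Fin (m + m')}
    {P : Fin m → Finset (Fin m)} {P' : Fin m' → Finset (Fin m')}
    (hC : patternOf C = concatPattern P P') : ∃ A B, rectAppend A B = C := by
  have hmem (p q) : C p q ∈ concatPattern P P' q := by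
    rw [← hC]; exact mem_image_of_mem _ (mem_univ p)
  have hleft (p) (q : Fin m) : ∃ x, Fin.castAdd m' x = C p (Fin.castAdd m' q) := by
    obtain ⟨x, -, hx⟩ := by simpa [concatPattern] using hmem p (Fin.castAdd m' q)
    exact ⟨x, hx⟩
  have hright (p) (q : Fin m') : ∃ x, Fin.natAdd m x = C p (Fin.natAdd m q) := by
    obtain ⟨x, -, hx⟩ := by simpa [concatPattern] using hmem p (Fin.natAdd m q)
    exact ⟨x, hx⟩
  choose A hA using hleft
  choose B hB using hright
  refine ⟨A, B, funext fun p => funext fun q => ?_⟩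
  refine Fin.addCases (fun q => ?_) (fun q => ?_) q <;> simp [hA, hB]

end RectAppend

theorem sum_colSign_concatPattern {i m m' : ℕ} (P : Fin m → Finset (Fin m))
    (P' : Fin m' → Finset (Fin m')) :
    ∑ C ∈ latinRects i (concatPattern P P'), colSign C =
      (∑ A ∈ latinRects i P, colSign A) * ∑ B ∈ latinRects i P', colSign B := by
  rw [sum_mul_sum, ← sum_product']
  refine (sum_nbij (fun AB => rectAppend AB.1 AB.2) ?_ ?_ ?_ ?_).symm
  · rintro ⟨A, B⟩ hAB
    simp only [mem_product, mem_latinRects] at hAB ⊢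
    rw [isLatinRect_rectAppend_iff, patternOf_rectAppend, hAB.1.2, hAB.2.2]
    exact ⟨⟨hAB.1.1, hAB.2.1⟩, rfl⟩
  · rintro ⟨A, B⟩ - ⟨A', B'⟩ - h
    simpa using rectAppend_inj.mp h
  · intro C hC
    obtain ⟨hlatin, hpattern⟩ := mem_latinRects.mp hC
    obtain ⟨A, B, rfl⟩ := exists_rectAppend_eq hpattern
    rw [patternOf_rectAppend, concatPattern_inj] at hpattern
    rw [isLatinRect_rectAppend_iff] at hlatin
    exact ⟨(A, B), by simp [mem_latinRects, hlatin, hpattern], rfl⟩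
  · exact fun _ _ => colSign_rectAppend.symm

theorem concatPattern_Lpos_ne_Lneg_general {i m m' : ℕ}
    (P : Fin m → Finset (Fin m)) (P' : Fin m' → Finset (Fin m'))
    (h1 : Lpos i P ≠ Lneg i P) (h2 : Lpos i P' ≠ Lneg i P') :
    Lpos i (concatPattern P P') ≠ Lneg i (concatPattern P P') := by
  have hprod : (Lpos i (concatPattern P P') : ℤ) - Lneg i (concatPattern P P') =
      ((Lpos i P : ℤ) - Lneg i P) * ((Lpos i P' : ℤ) - Lneg i P') := by
    simp only [Lpos_sub_Lneg_eq_sum_colSign, sum_colSign_concatPattern]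
  have hne : ((Lpos i P : ℤ) - Lneg i P) * ((Lpos i P' : ℤ) - Lneg i P') ≠ 0 :=
    mul_ne_zero (sub_ne_zero.mpr (Nat.cast_injective.ne h1))
      (sub_ne_zero.mpr (Nat.cast_injective.ne h2))
  rw [← hprod, sub_ne_zero] at hne
  exact_mod_cast hne

/-- If both patterns have unequal numbers of column-even and column-odd Latin rectangles,
then so does the concatenated pattern. -/
theorem concatPattern_Lpos_ne_Lneg {i m m' : ℕ}
    (P : Fin m → Finset (Fin m)) (P' : Fin m' → Finset (Fin m'))
    (hP : IsPattern i P) (hP' : IsPattern i P')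
    (h1 : Lpos i P ≠ Lneg i P) (h2 : Lpos i P' ≠ Lneg i P') :
    Lpos i (concatPattern P P') ≠ Lneg i (concatPattern P P') :=
  concatPattern_Lpos_ne_Lneg_general P P' h1 h2
end

section
/- The map sending a Latin (i,m)-rectangle to the Latin (i-1,m)-rectangle obtained by deleting its last row is injective, and its image is exactly the union of L_ℬ over those (i-1,m)-patterns ℬ that arise as the pattern of the top i-1 rows of some Latin (i,m)-rectangle with a fixed pattern 𝒜. Moreover, for each such ℬ there is a sign ε(ℬ) ∈ {±1} such that the preimage of the column-even (resp. column-odd) rectangles with pattern ℬ is contained in the column-ε(ℬ)-even (resp. opposite) rectangles with pattern 𝒜. -/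
open Finset

/-- Deleting the last row of an `(i+1) × m` rectangle. -/
def delLastRow {i m : ℕ} (A : Fin (i + 1) → Fin m → Fin m) : Fin i → Fin m → Fin m :=
  fun p => A p.castSucc

/-!
Write an `(i+1)`-row rectangle as its top rows `B` with a last row `r` appended
(`Fin.snoc B r`). Column `q` of the pattern is then `insert (r q) (patternOf B q)`, and for a
Latin rectangle `r q ∉ patternOf B q`; so `r` is determined by the two patterns, which gives
injectivity, and any Latin `B'` with the same pattern as `B` can receive the same last row.
Appending `r` multiplies `ε_c` by `∏_q sign ∏_{y ∈ ℬ q} (r q - y)`, which depends only on the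
pattern `ℬ` of `B` and on `r`, hence only on `ℬ` once `𝒜` is fixed.
-/

variable {i m : ℕ}

@[simp]
lemma delLastRow_snoc (B : Fin i → Fin m → Fin m) (r : Fin m → Fin m) :
    delLastRow (Fin.snoc B r : Fin (i + 1) → Fin m → Fin m) = B :=
  Fin.init_snoc _ _

@[simp]
lemma snoc_delLastRow (A : Fin (i + 1) → Fin m → Fin m) :
    Fin.snoc (delLastRow A) (A (Fin.last i)) = A :=
  Fin.snoc_init_self A

lemma mem_patternOf {A : Fin i → Fin m → Fin m} {q x : Fin m} :
    x ∈ patternOf A q ↔ ∃ p, A p q = x := by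
  simp [patternOf]

lemma coe_patternOf (A : Fin i → Fin m → Fin m) (q : Fin m) :
    (patternOf A q : Set (Fin m)) = Set.range fun p => A p q := by
  ext
  simp [mem_patternOf]

lemma patternOf_snoc (B : Fin i → Fin m → Fin m) (r : Fin m → Fin m) (q : Fin m) :
    patternOf (Fin.snoc B r : Fin (i + 1) → Fin m → Fin m) q = insert (r q) (patternOf B q) := by
  ext x
  simp only [mem_patternOf, Finset.mem_insert, Fin.exists_fin_succ', Fin.snoc_castSucc,
    Fin.snoc_last]
  tauto

lemma isLatinRect_snoc_iff {B : Fin i → Fin m → Fin m} {r : Fin m → Fin m} :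
    IsLatinRect (Fin.snoc B r : Fin (i + 1) → Fin m → Fin m) ↔
      IsLatinRect B ∧ Function.Bijective r ∧ ∀ q, r q ∉ patternOf B q := by
  have column_snoc (q : Fin m) :
      (fun p => (Fin.snoc B r : Fin (i + 1) → Fin m → Fin m) p q) =
        Fin.snoc (fun p => B p q) (r q) := by
    funext p
    induction p using Fin.lastCases <;> simp
  simp only [IsLatinRect, Fin.forall_fin_succ', Fin.snoc_castSucc, Fin.snoc_last, column_snoc,
    Fin.snoc_injective_iff, ← Finset.mem_coe, coe_patternOf, forall_and]
  tauto

lemma isLatinRect_iff_delLastRow {A : Fin (i + 1) → Fin m → Fin m} :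
    IsLatinRect A ↔ IsLatinRect (delLastRow A) ∧ Function.Bijective (A (Fin.last i)) ∧
      ∀ q, A (Fin.last i) q ∉ patternOf (delLastRow A) q := by
  conv_lhs => rw [← snoc_delLastRow A]
  exact isLatinRect_snoc_iff

lemma IsLatinRect.lastRow_eq_of_patternOf_eq {A A' : Fin (i + 1) → Fin m → Fin m}
    (hA : IsLatinRect A) (h : patternOf A = patternOf A')
    (hdel : patternOf (delLastRow A) = patternOf (delLastRow A')) :
    A (Fin.last i) = A' (Fin.last i) := by
  funext q
  have hq := congrFun h q
  rw [← snoc_delLastRow A, ← snoc_delLastRow A', patternOf_snoc, patternOf_snoc, ← hdel] at hq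
  exact (Finset.insert_inj ((isLatinRect_iff_delLastRow.mp hA).2.2 q)).mp hq

lemma prod_pairwise_sub_snoc (B : Fin i → Fin m → Fin m) (r : Fin m → Fin m) (q : Fin m) :
    (∏ p : Fin (i + 1), ∏ p' ∈ Finset.univ.filter (fun p' => p < p'),
      ((((Fin.snoc B r : Fin (i + 1) → Fin m → Fin m) p' q : ℕ) : ℤ) -
        (((Fin.snoc B r : Fin (i + 1) → Fin m → Fin m) p q : ℕ) : ℤ))) =
    (∏ p : Fin i, ∏ p' ∈ Finset.univ.filter (fun p' => p < p'),
      (((B p' q : ℕ) : ℤ) - ((B p q : ℕ) : ℤ))) *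
      ∏ p : Fin i, (((r q : ℕ) : ℤ) - ((B p q : ℕ) : ℤ)) := by
  simp only [Finset.prod_filter, Fin.prod_univ_castSucc, Fin.snoc_castSucc, Fin.snoc_last,
    Fin.castSucc_lt_castSucc_iff, Fin.castSucc_lt_last, (Fin.castSucc_lt_last _).not_gt,
    lt_irrefl, if_true, if_false, Finset.prod_const_one, mul_one, Finset.prod_mul_distrib]

def snocSign (ℬ : Fin m → Finset (Fin m)) (r : Fin m → Fin m) : ℤ :=
  ∏ q, Int.sign (∏ y ∈ ℬ q, (((r q : ℕ) : ℤ) - ((y : ℕ) : ℤ)))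

lemma isUnit_snocSign {ℬ : Fin m → Finset (Fin m)} {r : Fin m → Fin m}
    (hr : ∀ q, r q ∉ ℬ q) : IsUnit (snocSign ℬ r) := by
  refine IsUnit.prod_iff.mpr fun q _ =>
    Int.isUnit_iff_natAbs_eq.mpr (Int.natAbs_sign_of_ne_zero ?_)
  refine Finset.prod_ne_zero_iff.mpr fun y hy => sub_ne_zero.mpr fun h => hr q ?_
  rw [Nat.cast_inj, Fin.val_inj] at h
  exact h ▸ hy

lemma colSign_snoc {B : Fin i → Fin m → Fin m} (hB : ∀ q, Function.Injective fun p => B p q)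
    (r : Fin m → Fin m) :
    colSign (Fin.snoc B r : Fin (i + 1) → Fin m → Fin m) =
      snocSign (patternOf B) r * colSign B := by
  rw [colSign, colSign, snocSign, mul_comm, ← Finset.prod_mul_distrib]
  refine Finset.prod_congr rfl fun q _ => ?_
  rw [prod_pairwise_sub_snoc, Int.sign_mul, patternOf, Finset.prod_image fun _ _ _ _ h => hB q h]

lemma IsLatinRect.colSign_eq {A : Fin (i + 1) → Fin m → Fin m} (hA : IsLatinRect A) :
    colSign A = snocSign (patternOf (delLastRow A)) (A (Fin.last i)) * colSign (delLastRow A) := by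
  conv_lhs => rw [← snoc_delLastRow A]
  exact colSign_snoc (isLatinRect_iff_delLastRow.mp hA).1.2 _

theorem delLastRow_injOn_image_sign_general {i m : ℕ} (𝒜 : Fin m → Finset (Fin m)) :
    Set.InjOn delLastRow {A : Fin (i + 1) → Fin m → Fin m | IsLatinRect A ∧ patternOf A = 𝒜} ∧
    delLastRow '' {A : Fin (i + 1) → Fin m → Fin m | IsLatinRect A ∧ patternOf A = 𝒜}
      = {B : Fin i → Fin m → Fin m | IsLatinRect B ∧
          ∃ A : Fin (i + 1) → Fin m → Fin m, IsLatinRect A ∧ patternOf A = 𝒜 ∧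
            patternOf (delLastRow A) = patternOf B} ∧
    ∀ ℬ : Fin m → Finset (Fin m),
      (∃ A : Fin (i + 1) → Fin m → Fin m, IsLatinRect A ∧ patternOf A = 𝒜 ∧
          patternOf (delLastRow A) = ℬ) →
      ∃ ε : ℤ, (ε = 1 ∨ ε = -1) ∧
        ∀ A : Fin (i + 1) → Fin m → Fin m, IsLatinRect A → patternOf A = 𝒜 →
          patternOf (delLastRow A) = ℬ → colSign A = ε * colSign (delLastRow A) := by
  refine ⟨?injOn, ?image, ?sign⟩
  case injOn =>
    rintro A ⟨hA, rfl⟩ A' ⟨-, hpat⟩ hdel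
    rw [← snoc_delLastRow A, ← snoc_delLastRow A', hdel,
      hA.lastRow_eq_of_patternOf_eq hpat.symm (congrArg patternOf hdel)]
  case image =>
    ext B
    constructor
    · rintro ⟨A, ⟨hA, hpat⟩, rfl⟩
      exact ⟨(isLatinRect_iff_delLastRow.mp hA).1, A, hA, hpat, rfl⟩
    · rintro ⟨hB, A, hA, rfl, hpat⟩
      obtain ⟨-, hr, hnotMem⟩ := isLatinRect_iff_delLastRow.mp hA
      refine ⟨Fin.snoc B (A (Fin.last i)), ⟨isLatinRect_snoc_iff.mpr ⟨hB, hr, hpat ▸ hnotMem⟩, ?_⟩,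
        delLastRow_snoc _ _⟩
      conv_rhs => rw [← snoc_delLastRow A]
      funext q
      rw [patternOf_snoc, patternOf_snoc, hpat]
  case sign =>
    rintro ℬ ⟨A₀, hA₀, rfl, rfl⟩
    refine ⟨snocSign (patternOf (delLastRow A₀)) (A₀ (Fin.last i)),
      Int.isUnit_iff.mp (isUnit_snocSign (isLatinRect_iff_delLastRow.mp hA₀).2.2), ?_⟩
    intro A hA hpat hdel
    rw [hA.colSign_eq, hdel, hA.lastRow_eq_of_patternOf_eq hpat hdel]

/-- Deleting the last row is injective on the Latin rectangles with a fixed pattern `𝒜`;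
its image consists exactly of those Latin `(i,m)`-rectangles whose pattern arises as the
pattern of the top `i` rows of some Latin `(i+1,m)`-rectangle with pattern `𝒜`; and for
every such pattern `ℬ` there is a sign `ε(ℬ) ∈ {±1}` with
`ε_c(A) = ε(ℬ) · ε_c(delLastRow A)` for all `A ∈ L_𝒜` whose truncation has pattern `ℬ`. -/
theorem delLastRow_injOn_image_sign {i m : ℕ} (𝒜 : Fin m → Finset (Fin m))
    (h𝒜 : IsPattern (i + 1) 𝒜) :
    Set.InjOn delLastRow {A : Fin (i + 1) → Fin m → Fin m | IsLatinRect A ∧ patternOf A = 𝒜} ∧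
    delLastRow '' {A : Fin (i + 1) → Fin m → Fin m | IsLatinRect A ∧ patternOf A = 𝒜}
      = {B : Fin i → Fin m → Fin m | IsLatinRect B ∧
          ∃ A : Fin (i + 1) → Fin m → Fin m, IsLatinRect A ∧ patternOf A = 𝒜 ∧
            patternOf (delLastRow A) = patternOf B} ∧
    ∀ ℬ : Fin m → Finset (Fin m),
      (∃ A : Fin (i + 1) → Fin m → Fin m, IsLatinRect A ∧ patternOf A = 𝒜 ∧
          patternOf (delLastRow A) = ℬ) →
      ∃ ε : ℤ, (ε = 1 ∨ ε = -1) ∧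
        ∀ A : Fin (i + 1) → Fin m → Fin m, IsLatinRect A → patternOf A = 𝒜 →
          patternOf (delLastRow A) = ℬ → colSign A = ε * colSign (delLastRow A) :=
  delLastRow_injOn_image_sign_general 𝒜
end

section
/- Let m be even, m' = m/2, and let E_{j,j} denote the i×i matrix with 1 in entry (j,j) and 0 elsewhere. Then the polynomial A ↦ (det A)^{m'} on i×i matrices, polarized to a symmetric multilinear function of i·m' matrix arguments and evaluated on the arguments consisting of m' copies each of E_{j_1,j_1},...,E_{j_i,j_i}, is nonzero exactly when j_1,...,j_i is a permutation of 1,...,i, in which case it equals (m'!)^i/(im')! times the number of orderings, i.e. the full sum over all (j_1,...,j_i) ∈ {1,...,i}^i equals i!(m'!)^i/(im')! ≠ 0. -/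
/-! The matrix `∑ t_{(a,r)} E_{j_a, j_a}` is diagonal, so `det^{m'}` is the product over the `i·m'`
slots `q = (b, r)` of the linear forms `∑_{j_a = b} t_{(a,r')}`. The coefficient of the squarefree
monomial `∏ t_q` in a product of linear forms indexed by the variables is the permanent of the
coefficient matrix: here, the number of permutations `g` of the slots with `j (g q).1 = q.1`.
There are none unless `j` is onto; if `j` is bijective, composing with `j × id` identifies them
with the permutations preserving the first coordinate, of which there are `(m'!)^i`. -/

open Finset

/-- The squarefree exponent `t_1 ⋯ t_{i m'}`, variables indexed by pairs `(a, r)` with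
`a ∈ Fin i` and `r ∈ Fin m'` (the argument slots: `m'` copies for each `a`). -/
noncomputable def sfExp (i m' : ℕ) : (Fin i × Fin m') →₀ ℕ :=
  Finsupp.equivFunOnFinite.symm fun _ => 1

/-- The polarization of `A ↦ (det A)^{m'}` (a homogeneous polynomial of degree `i·m'` on
`i × i` matrices), evaluated on the `i·m'` arguments consisting of `m'` copies each of
`E_{j_1,j_1}, ..., E_{j_i,j_i}`: it is `(1/(i m')!)` times the coefficient of
`t_1 ⋯ t_{i m'}` in `(det ∑_{(a,r)} t_{(a,r)} E_{j_a, j_a})^{m'}`. -/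
noncomputable def polarDetPow (i m' : ℕ) (j : Fin i → Fin i) : ℚ :=
  (((i * m').factorial : ℚ))⁻¹ *
    MvPolynomial.coeff (sfExp i m')
      ((Matrix.det (∑ p : Fin i × Fin m',
          Matrix.single (j p.1) (j p.1)
            (MvPolynomial.X p : MvPolynomial (Fin i × Fin m') ℚ))) ^ m')

open MvPolynomial Matrix Function
open scoped Nat

section Permanent

variable {σ R : Type*} [Fintype σ] [DecidableEq σ] [CommRing R]

theorem sum_single_one_eq_one_iff_bijective (g : σ → σ) :
    ∑ q, Finsupp.single (g q) 1 = Finsupp.equivFunOnFinite.symm (fun _ => 1) ↔ Bijective g := by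
  rw [bijective_iff_existsUnique, Finsupp.ext_iff]
  refine forall_congr' fun p => ?_
  rw [Fintype.existsUnique_iff_card_one]
  simp [Finsupp.finsetSum_apply, Finsupp.single_apply]

theorem coeff_prod_sum_smul_X_eq_permanent (c : Matrix σ σ R) :
    coeff (Finsupp.equivFunOnFinite.symm fun _ => 1) (∏ q, ∑ p, c p q • X p) = c.permanent := by
  have coeff_term (g : σ → σ) : coeff (Finsupp.equivFunOnFinite.symm fun _ => 1)
      (∏ q, c (g q) q • (X (g q) : MvPolynomial σ R)) =
        if Bijective g then ∏ q, c (g q) q else 0 := by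
    simp only [Finset.prod_smul, X]
    rw [← monomial_sum_one, coeff_smul, coeff_monomial]
    simp only [sum_single_one_eq_one_iff_bijective]
    split_ifs <;> simp
  rw [Fintype.prod_sum, coeff_sum]
  simp_rw [coeff_term]
  rw [← Finset.sum_filter, permanent, Finset.sum_subtype _ (p := Bijective) mem_filter_univ]
  exact Fintype.sum_equiv Equiv.bijectiveEquiv _ _ fun _ => rfl

theorem permanent_of_boole (P : σ → σ → Prop) [DecidableRel P] :
    (Matrix.of fun p q => if P p q then (1 : R) else 0).permanent
      = Fintype.card {g : Equiv.Perm σ // ∀ q, P (g q) q} := by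
  simp [permanent, prod_boole, Fintype.card_subtype]

end Permanent

section CountPerm

variable {ι β : Type*} [Fintype ι] [DecidableEq ι] [Fintype β] [DecidableEq β]

theorem card_perm_fst_eq_zero [Nonempty β] {j : ι → ι} (hj : ¬ Bijective j) :
    Fintype.card {g : Equiv.Perm (ι × β) // ∀ q, j (g q).1 = q.1} = 0 := by
  rw [Fintype.card_eq_zero_iff, isEmpty_subtype]
  intro g hg
  obtain ⟨x⟩ := ‹Nonempty β›
  exact hj (Finite.surjective_iff_bijective.1 fun b => ⟨_, hg (b, x)⟩)

theorem card_perm_fst_eq_pow {j : ι → ι} (hj : Bijective j) :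
    Fintype.card {g : Equiv.Perm (ι × β) // ∀ q, j (g q).1 = q.1}
      = (Fintype.card β)! ^ Fintype.card ι := by
  let τ : Equiv.Perm (ι × β) := (Equiv.ofBijective j hj).prodCongr (Equiv.refl β)
  rw [Fintype.card_congr (Equiv.subtypeEquiv
      (q := fun h : Equiv.Perm (ι × β) => Prod.fst ∘ h = Prod.fst) (Equiv.mulLeft τ) fun g => ?_),
    DomMulAct.stabilizer_card]
  · have card_fiber (a : ι) : Fintype.card {q : ι × β // q.1 = a} = Fintype.card β := by
      simp [Fintype.card_congr (Equiv.prodSubtypeFstEquivSubtypeProd (p := (· = a)))]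
    simp [card_fiber]
  · simp [_root_.funext_iff, τ]

theorem card_bijective_eq_factorial : #{f : ι → ι | Bijective f} = (Fintype.card ι)! := by
  rw [← Fintype.card_subtype, Fintype.card_congr Equiv.bijectiveEquiv, Fintype.card_perm]

end CountPerm

theorem det_sum_single_X_pow {ι R : Type*} [Fintype ι] [DecidableEq ι] [CommRing R]
    (m' : ℕ) (j : ι → ι) :
    det (∑ p : ι × Fin m', single (j p.1) (j p.1) (X p : MvPolynomial (ι × Fin m') R)) ^ m'
      = ∏ q : ι × Fin m',
          ∑ p, (of fun p q : ι × Fin m' => if j p.1 = q.1 then (1 : R) else 0) p q • X p := by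
  have hdiag : ∑ p : ι × Fin m', single (j p.1) (j p.1) (X p : MvPolynomial (ι × Fin m') R)
      = diagonal fun b => ∑ p : ι × Fin m', if j p.1 = b then X p else 0 := by
    refine Matrix.ext fun a b => ?_
    rcases eq_or_ne a b with rfl | hab
    · simp [Matrix.sum_apply, single_apply]
    · simp only [Matrix.sum_apply, single_apply, diagonal_apply_ne _ hab]
      exact sum_eq_zero fun p _ => if_neg fun h => hab (h.1.symm.trans h.2)
  rw [hdiag, det_diagonal, ← prod_pow, Fintype.prod_prod_type]
  simp

theorem polarDetPow_eq_card (i m' : ℕ) (j : Fin i → Fin i) :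
    polarDetPow i m' j = ((i * m')! : ℚ)⁻¹ *
      Fintype.card {g : Equiv.Perm (Fin i × Fin m') // ∀ q, j (g q).1 = q.1} := by
  rw [polarDetPow, det_sum_single_X_pow, sfExp, coeff_prod_sum_smul_X_eq_permanent,
    permanent_of_boole]

theorem polarDetPow_eq {i m' : ℕ} (hm' : 0 < m') (j : Fin i → Fin i) :
    polarDetPow i m' j = if Bijective j then (m' ! : ℚ) ^ i / (i * m')! else 0 := by
  have : Nonempty (Fin m') := ⟨⟨0, hm'⟩⟩
  rw [polarDetPow_eq_card]
  split_ifs with hj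
  · rw [card_perm_fst_eq_pow hj]
    simp [div_eq_inv_mul]
  · rw [card_perm_fst_eq_zero hj, Nat.cast_zero, mul_zero]

theorem polarDetPow_ne_zero_iff_and_sum_general (m' i : ℕ) (hm' : 0 < m') :
    (∀ j : Fin i → Fin i, polarDetPow i m' j ≠ 0 ↔ Function.Bijective j) ∧
    (∑ j : Fin i → Fin i, polarDetPow i m' j
      = (i.factorial : ℚ) * (m'.factorial : ℚ) ^ i / ((i * m').factorial : ℚ)) ∧
    (i.factorial : ℚ) * (m'.factorial : ℚ) ^ i / ((i * m').factorial : ℚ) ≠ 0 := by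
  simp_rw [polarDetPow_eq hm']
  refine ⟨fun j => ?_, ?_, by positivity⟩
  · split_ifs with hj
    · exact iff_of_true (by positivity) hj
    · exact iff_of_false (not_ne_iff.2 rfl) hj
  · rw [Finset.sum_ite, sum_const_zero, sum_const, card_bijective_eq_factorial]
    simp [mul_div_assoc]

/-- Let `m` be even, `m' = m/2`.  The polarization of `det^{m'}` on `m'` copies each of
`E_{j_1,j_1},...,E_{j_i,j_i}` is nonzero exactly when `(j_1,...,j_i)` is a permutation of
`(1,...,i)`, and the full sum over all tuples equals `i!(m'!)^i/(i m')! ≠ 0`. -/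
theorem polarDetPow_ne_zero_iff_and_sum (m m' i : ℕ) (hm : m = 2 * m') (hm' : 0 < m')
    (hi1 : 1 ≤ i) (him : i ≤ m) :
    (∀ j : Fin i → Fin i, polarDetPow i m' j ≠ 0 ↔ Function.Bijective j) ∧
    (∑ j : Fin i → Fin i, polarDetPow i m' j
      = (i.factorial : ℚ) * (m'.factorial : ℚ) ^ i / ((i * m').factorial : ℚ)) ∧
    (i.factorial : ℚ) * (m'.factorial : ℚ) ^ i / ((i * m').factorial : ℚ) ≠ 0 :=
  polarDetPow_ne_zero_iff_and_sum_general m' i hm'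
end

section
/- Let m be a positive even integer and E a complex vector space of dimension ℓ ≥ 1, with 1 ≤ i ≤ ℓ. Granting Howe's result that [S^j(S^m(W))]^{SL(W)} = 0 for 0 < j < dim W and is one-dimensional for j = dim W (m even), the smallest positive integer d such that V_E(dδ_i) occurs in the symmetric algebra S^•(S^m(E)) is d = m; moreover V_E(mδ_i) occurs with multiplicity exactly one, and it occurs in S^i(S^m(E)). -/
open Finset

/-- Coordinates model of `⊗^{jm} ℂ^n`, with tensor positions indexed by
`Fin j × Fin m` (`j` blocks of `m` factors): a tensor is a coefficient function
`idx ↦ c idx` on multi-indices `idx : Fin j × Fin m → Fin n`.  A matrix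
`g ∈ End(ℂ^n)` acts by `(g·c)(idx) = ∑_{jdx} (∏_t g_{idx t, jdx t}) c(jdx)`. -/
noncomputable def matAct {j m n : ℕ} (g : Matrix (Fin n) (Fin n) ℂ)
    (c : ((Fin j × Fin m) → Fin n) → ℂ) : ((Fin j × Fin m) → Fin n) → ℂ :=
  fun idx => ∑ jdx : (Fin j × Fin m) → Fin n,
    (∏ t : Fin j × Fin m, g (idx t) (jdx t)) * c jdx

/-- Upper triangular invertible matrices: the Borel subgroup `B`. -/
def IsUT {n : ℕ} (g : Matrix (Fin n) (Fin n) ℂ) : Prop :=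
  (∀ a b : Fin n, b < a → g a b = 0) ∧ IsUnit g.det

/-- Invariance under the subgroup `H = S_m^{×j} ⋊ S_j ⊂ S_{jm}` permuting the tensor
positions (permuting within each of the `j` blocks of size `m`, and permuting the
blocks): this cuts out `S^j(S^m(ℂ^n)) ⊂ ⊗^{jm} ℂ^n`. -/
def HInv {j m n : ℕ} (c : ((Fin j × Fin m) → Fin n) → ℂ) : Prop :=
  ∀ (π : Equiv.Perm (Fin j)) (ρ : Fin j → Equiv.Perm (Fin m))
    (idx : (Fin j × Fin m) → Fin n),
    c (fun ab => idx (π ab.1, ρ ab.1 ab.2)) = c idx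

/-- The character of `B` given by the weight `d·δ_i`: `b ↦ (∏_{k < i} b_{kk})^d`. -/
noncomputable def wtChar {n : ℕ} (i d : ℕ) (g : Matrix (Fin n) (Fin n) ℂ) : ℂ :=
  (∏ k ∈ Finset.univ.filter (fun k : Fin n => (k : ℕ) < i), g k k) ^ d

/-- Extension by zero: the inclusion `⊗^{jm}(E_i) ⊂ ⊗^{jm}(E)` for `E_i = ℂ^i ⊂ ℂ^n`,
in coordinates: extend a coefficient function on `Fin i`-valued multi-indices to all
multi-indices, by zero off the `Fin i`-valued ones. -/
noncomputable def extTensor {j m n i : ℕ} (h : i ≤ n)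
    (c : ((Fin j × Fin m) → Fin i) → ℂ) : ((Fin j × Fin m) → Fin n) → ℂ :=
  fun idx =>
    if hs : ∀ ab, ((idx ab : ℕ) < i) then c (fun ab => ⟨(idx ab : ℕ), hs ab⟩) else 0

/-- The `SL(ℂ^ν)`-invariants in `S^jj(S^m(ℂ^ν))` (coordinates model). -/
noncomputable def SLInvSet (m ν jj : ℕ) : Set (((Fin jj × Fin m) → Fin ν) → ℂ) :=
  {c | HInv c ∧ ∀ g : Matrix (Fin ν) (Fin ν) ℂ, g.det = 1 → matAct g c = c}

/-- The space of `B`-highest weight vectors (together with `0`) of weight `d·δ_i` in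
`S^j(S^m(ℂ^n))`: its dimension is the multiplicity of `V_E(dδ_i)` in `S^j(S^m(E))`. -/
noncomputable def EigSet (m n j d i : ℕ) : Set (((Fin j × Fin m) → Fin n) → ℂ) :=
  {c | HInv c ∧ ∀ g, IsUT g → matAct g c = wtChar i d g • c}

/-!
By the action of the diagonal torus, a highest weight vector `c` of weight `d δ_i` in
`S^j(S^m(E))` is supported on multi-indices in which each of the first `i` basis vectors occurs
exactly `d` times and no other occurs; hence `j m = i d`, and `c` lies in the tensors over
`E_i`. Its restriction to `E_i` is fixed by the upper unitriangular transvections and has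
weight zero for the `sl₂`-triple `(E_ab, E_ba, E_aa - E_bb)` of every pair `a < b`, so by the
`sl₂` theory of primitive vectors it is also killed by `E_ba`; being fixed by all transvections
and by the diagonal matrices of determinant one, it is `SL(E_i)`-invariant. Conversely, an
`SL(E_i)`-invariant of degree `i`, extended by zero, transforms under the Borel subgroup by
`det^m` of the upper left `i × i` block (scale by an `i`-th root of the determinant), which is
the character `m δ_i`. Howe's result now gives nothing for `d < m` (which would force `j < i`),
a line for `d = m`, `j = i`, and nothing for `j ≠ i`.
-/

namespace HighestWeight

open Matrix

lemma eq_zero_of_forall_sum_mul_pow_eq_zero {K : Type*} [Field K] [Infinite K] {N : ℕ}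
    {f : ℕ → K} (h : ∀ s : K, ∑ k ∈ range N, f k * s ^ k = 0) {k : ℕ} (hk : k < N) :
    f k = 0 := by
  have hp : ∑ l ∈ range N, Polynomial.C (f l) * Polynomial.X ^ l = 0 :=
    Polynomial.zero_of_eval_zero _ fun s => by simpa [Polynomial.eval_finsetSum] using h s
  simpa [Polynomial.finsetSum_coeff, Polynomial.coeff_C_mul_X_pow, hk] using
    congrArg (Polynomial.coeff · k) hp

section Weights

variable {P ι : Type*} [Fintype P] [DecidableEq ι]

def count (idx : P → ι) (k : ι) : ℕ := #{t | idx t = k}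

lemma sum_count [Fintype ι] (idx : P → ι) : ∑ k, count idx k = Fintype.card P := by
  simp only [count, ← Finset.card_eq_sum_card_fiberwise (fun t _ => Finset.mem_univ (idx t)),
    Finset.card_univ]

lemma prod_comp_eq_prod_pow_count [Fintype ι] {M : Type*} [CommMonoid M] (f : ι → M)
    (idx : P → ι) :
    ∏ t, f (idx t) = ∏ k, f k ^ count idx k := by
  simp only [count]
  rw [← Finset.prod_fiberwise_of_maps_to (fun t _ => Finset.mem_univ (idx t))]
  refine Finset.prod_congr rfl fun k _ => ?_
  rw [← Finset.prod_const]
  exact Finset.prod_congr rfl fun t ht => by rw [(Finset.mem_filter.mp ht).2]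

lemma count_update_add [DecidableEq P] (idx : P → ι) (t : P) (b k : ι) :
    count (Function.update idx t b) k + (if idx t = k then 1 else 0)
      = count idx k + (if b = k then 1 else 0) := by
  simp only [count, Finset.card_filter]
  rw [← Finset.add_sum_erase _ _ (Finset.mem_univ t),
    ← Finset.add_sum_erase _ (fun t' => if idx t' = k then 1 else 0) (Finset.mem_univ t)]
  have : ∀ t' ∈ univ.erase t,
      (if Function.update idx t b t' = k then 1 else 0) = if idx t' = k then 1 else 0 :=
    fun t' ht' => by rw [Function.update_of_ne (Finset.ne_of_mem_erase ht')]
  rw [Finset.sum_congr rfl this, Function.update_self]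
  ring

end Weights

section LieAction

variable {K P ι : Type*} [Field K] [Fintype P] [DecidableEq ι]

-- `weightDiff a b` and `singleAct a b` are the actions of `E_aa - E_bb` and of the matrix unit
-- `E_ab` of `gl(ι)` on the tensor power `⊗^P K^ι`.
noncomputable def weightDiff (a b : ι) : Module.End K ((P → ι) → K) :=
  LinearMap.pi fun idx => ((count idx a : K) - count idx b) • LinearMap.proj idx

lemma weightDiff_apply (a b : ι) (c : (P → ι) → K) (idx : P → ι) :
    weightDiff a b c idx = ((count idx a : K) - count idx b) * c idx := by
  simp [weightDiff]

lemma weightDiff_swap (a b : ι) :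
    (weightDiff b a : Module.End K ((P → ι) → K)) = -weightDiff a b := by
  refine LinearMap.ext fun c => funext fun idx => ?_
  simp only [weightDiff_apply, LinearMap.neg_apply, Pi.neg_apply]
  ring

variable [DecidableEq P]

noncomputable def singleAct (a b : ι) : Module.End K ((P → ι) → K) :=
  LinearMap.pi fun idx => ∑ t with idx t = a, LinearMap.proj (Function.update idx t b)

lemma singleAct_apply (a b : ι) (c : (P → ι) → K) (idx : P → ι) :
    singleAct a b c idx = ∑ t with idx t = a, c (Function.update idx t b) := by
  simp [singleAct]

lemma singleAct_singleAct_apply {a b : ι} (hab : a ≠ b) (c : (P → ι) → K) (idx : P → ι) :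
    singleAct a b (singleAct b a c) idx = count idx a * c idx
      + ∑ t with idx t = a, ∑ t' with idx t' = b,
          c (Function.update (Function.update idx t b) t' a) := by
  have inner : ∀ t ∈ (univ.filter fun t => idx t = a), singleAct b a c (Function.update idx t b)
      = c idx + ∑ t' with idx t' = b, c (Function.update (Function.update idx t b) t' a) := by
    intro t ht
    have hta : idx t = a := (Finset.mem_filter.mp ht).2
    have hfilter : (univ.filter fun t' => Function.update idx t b t' = b)
        = insert t (univ.filter fun t' => idx t' = b) := by
      ext t'
      by_cases h : t' = t <;> simp [h]
    rw [singleAct_apply, hfilter, Finset.sum_insert (by simp [hta, hab]),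
      Function.update_idem, ← hta, Function.update_eq_self]
  rw [singleAct_apply, Finset.sum_congr rfl inner, Finset.sum_add_distrib, Finset.sum_const,
    nsmul_eq_mul, count]

lemma singleAct_commutator {a b : ι} (hab : a ≠ b) :
    singleAct a b * singleAct b a - singleAct b a * singleAct a b
      = (weightDiff a b : Module.End K ((P → ι) → K)) := by
  refine LinearMap.ext fun c => funext fun idx => ?_
  simp only [LinearMap.sub_apply, Module.End.mul_apply, Pi.sub_apply,
    singleAct_singleAct_apply hab, singleAct_singleAct_apply hab.symm, weightDiff_apply]
  rw [Finset.sum_comm (s := (univ.filter fun t => idx t = b))]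
  have : ∀ t ∈ (univ.filter fun t => idx t = a), ∀ t' ∈ (univ.filter fun t => idx t = b),
      c (Function.update (Function.update idx t b) t' a)
        = c (Function.update (Function.update idx t' a) t b) := by
    intro t ht t' ht'
    rw [Function.update_comm]
    rintro rfl
    exact hab ((Finset.mem_filter.mp ht).2.symm.trans (Finset.mem_filter.mp ht').2)
  rw [Finset.sum_congr rfl fun t ht => Finset.sum_congr rfl (this t ht)]
  ring

lemma weightDiff_commutator {a b : ι} (hab : a ≠ b) :
    weightDiff a b * singleAct a b - singleAct a b * weightDiff a b
      = (2 : K) • (singleAct a b : Module.End K ((P → ι) → K)) := by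
  refine LinearMap.ext fun c => funext fun idx => ?_
  simp only [LinearMap.sub_apply, Module.End.mul_apply, Pi.sub_apply, LinearMap.smul_apply,
    Pi.smul_apply, smul_eq_mul, singleAct_apply, weightDiff_apply, Finset.mul_sum,
    ← Finset.sum_sub_distrib]
  refine Finset.sum_congr rfl fun t ht => ?_
  have hta : idx t = a := (Finset.mem_filter.mp ht).2
  have hca := count_update_add idx t b a
  have hcb := count_update_add idx t b b
  simp only [hta, hab, hab.symm, if_true, if_false, add_zero] at hca hcb
  have hca' := congrArg (Nat.cast : ℕ → K) hca
  have hcb' := congrArg (Nat.cast : ℕ → K) hcb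
  push_cast at hca' hcb'
  linear_combination (c (Function.update idx t b)) * (hcb' - hca')

attribute [local instance] LieRing.ofAssociativeRing

lemma isSl2Triple_weightDiff_singleAct [CharZero K] [Nonempty P] {a b : ι} (hab : a ≠ b) :
    IsSl2Triple (weightDiff a b : Module.End K ((P → ι) → K)) (singleAct a b)
      (singleAct b a) where
  h_ne_zero h := by
    have := congrFun (LinearMap.congr_fun h (Pi.single (fun _ => a) 1)) (fun _ => a)
    simp [weightDiff_apply, count, hab] at this
  lie_e_f := by rw [Ring.lie_def, singleAct_commutator hab]
  lie_h_e_nsmul := by rw [Ring.lie_def, weightDiff_commutator hab, ofNat_smul_eq_nsmul]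
  lie_h_f_nsmul := by
    rw [Ring.lie_def, ← neg_neg (weightDiff a b), ← weightDiff_swap, neg_mul, mul_neg,
      sub_neg_eq_add, neg_add_eq_sub, ← neg_sub, weightDiff_commutator hab.symm,
      ofNat_smul_eq_nsmul]

lemma singleAct_eq_zero_of_primitive [CharZero K] [Finite ι] {a b : ι} (hab : a ≠ b)
    {c : (P → ι) → K} (he : singleAct a b c = 0) (hh : weightDiff a b c = 0) :
    singleAct b a c = 0 := by
  rcases isEmpty_or_nonempty P with hP | hP
  · ext idx
    simp [singleAct_apply]
  by_cases hc : c = 0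
  · simp [hc]
  have hprim :
      (isSl2Triple_weightDiff_singleAct (K := K) (P := P) hab).HasPrimitiveVectorWith c (0 : K) :=
    ⟨hc, by simpa using hh, he⟩
  -- a primitive vector of weight `0` spans a trivial `sl₂`-module
  simpa using hprim.pow_toEnd_f_eq_zero_of_eq_nat (n := 0) (by simp)

-- The coefficient of `s ^ k` in the action of `transvection a b s`; it equals
-- `singleAct a b ^ k / k!` applied to `c`.
noncomputable def flipSum (a b : ι) (k : ℕ) (c : (P → ι) → K) (idx : P → ι) : K :=
  ∑ S ∈ powersetCard k (univ.filter fun t => idx t = a), c (S.piecewise (fun _ => b) idx)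

lemma flipSum_zero (a b : ι) (c : (P → ι) → K) : flipSum a b 0 c = c := by
  ext idx
  simp [flipSum]

lemma flipSum_one (a b : ι) (c : (P → ι) → K) : flipSum a b 1 c = singleAct a b c := by
  ext idx
  simp [flipSum, singleAct_apply, Finset.powersetCard_one, Finset.piecewise_singleton]

lemma flipSum_eq_zero_of_count_lt {a : ι} (b : ι) {k : ℕ} (c : (P → ι) → K)
    {idx : P → ι} (hk : count idx a < k) : flipSum a b k c idx = 0 := by
  rw [flipSum, Finset.powersetCard_eq_empty.mpr hk, Finset.sum_empty]

lemma singleAct_flipSum {a b : ι} (hab : a ≠ b) (k : ℕ) (c : (P → ι) → K)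
    (idx : P → ι) :
    singleAct a b (flipSum a b k c) idx = (k + 1) * flipSum a b (k + 1) c idx := by
  set A := univ.filter fun t => idx t = a
  have hterm : ∀ t ∈ A, flipSum a b k c (Function.update idx t b)
      = ∑ S ∈ (powersetCard (k + 1) A).filter (t ∈ ·), c (S.piecewise (fun _ => b) idx) := by
    intro t ht
    have hA : (univ.filter fun t' => Function.update idx t b t' = a) = A.erase t := by
      ext t'
      by_cases h : t' = t <;> simp [A, h, hab.symm]
    rw [flipSum, hA]
    have htS : ∀ S ∈ powersetCard k (A.erase t), t ∉ S := fun S hS h =>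
      Finset.notMem_erase t A ((Finset.mem_powersetCard.mp hS).1 h)
    refine Finset.sum_nbij' (insert t) (·.erase t) (fun S hS => ?_) (fun S hS => ?_)
      (fun S hS => Finset.erase_insert (htS S hS))
      (fun S hS => Finset.insert_erase (Finset.mem_filter.mp hS).2) (fun S hS => ?_)
    · obtain ⟨hSA, hSk⟩ := Finset.mem_powersetCard.mp hS
      rw [Finset.mem_filter, Finset.mem_powersetCard, Finset.card_insert_of_notMem (htS S hS), hSk]
      exact ⟨⟨Finset.insert_subset ht (hSA.trans (Finset.erase_subset t A)), rfl⟩,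
        Finset.mem_insert_self t S⟩
    · obtain ⟨hS, htS⟩ := Finset.mem_filter.mp hS
      obtain ⟨hSA, hSk⟩ := Finset.mem_powersetCard.mp hS
      rw [Finset.mem_powersetCard, Finset.card_erase_of_mem htS, hSk]
      exact ⟨Finset.erase_subset_erase t hSA, Nat.add_sub_cancel k 1⟩
    · rw [Finset.piecewise_insert, ← Finset.update_piecewise_of_notMem _ _ _ (htS S hS)]
  rw [singleAct_apply, Finset.sum_congr rfl hterm, Finset.sum_comm' (t' := powersetCard (k + 1) A)
    (s' := id), flipSum, Finset.mul_sum]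
  · refine Finset.sum_congr rfl fun S hS => ?_
    rw [id, Finset.sum_const, (Finset.mem_powersetCard.mp hS).2, nsmul_eq_mul]
    push_cast
    rfl
  · intro t S
    simp only [Finset.mem_filter, Finset.mem_powersetCard, id]
    constructor
    · rintro ⟨-, h, ht⟩
      exact ⟨ht, h⟩
    · rintro ⟨ht, h⟩
      exact ⟨h.1 ht, h, ht⟩

lemma mem_iff_piecewise_ne {a b : ι} (hab : a ≠ b) {idx : P → ι} {S : Finset P}
    (hS : S ⊆ univ.filter fun t => idx t = a) (t : P) :
    t ∈ S ↔ S.piecewise (fun _ => b) idx t ≠ idx t := by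
  by_cases ht : t ∈ S
  · simp [ht, (Finset.mem_filter.mp (hS ht)).2, hab.symm]
  · simp [ht]

end LieAction

section TensorPower

variable {K P ι : Type*} [Field K] [Fintype P] [DecidableEq P] [Fintype ι] [DecidableEq ι]

-- The matrix of `g^{⊗P}` in the basis of pure tensors `e_{idx 1} ⊗ ⋯`, indexed by `idx : P → ι`.
noncomputable def tensorPowHom : Matrix ι ι K →* Matrix (P → ι) (P → ι) K where
  toFun g := Matrix.of fun idx jdx => ∏ t, g (idx t) (jdx t)
  map_one' := by
    ext idx jdx
    simp only [Matrix.of_apply, Matrix.one_apply, Finset.prod_ite_zero, Finset.prod_const_one,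
      Finset.mem_univ, forall_const, funext_iff]
  map_mul' A B := by
    ext idx jdx
    simp only [Matrix.of_apply, Matrix.mul_apply, Finset.prod_univ_sum, Fintype.piFinset_univ,
      Finset.prod_mul_distrib]

lemma tensorPowHom_apply (g : Matrix ι ι K) (idx jdx : P → ι) :
    tensorPowHom g idx jdx = ∏ t, g (idx t) (jdx t) := rfl

lemma matAct_eq_mulVec {j m n : ℕ} (g : Matrix (Fin n) (Fin n) ℂ)
    (c : ((Fin j × Fin m) → Fin n) → ℂ) : matAct g c = tensorPowHom g *ᵥ c := rfl

lemma tensorPowHom_smul (a : K) (g : Matrix ι ι K) :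
    tensorPowHom (a • g)
      = a ^ Fintype.card P • (tensorPowHom g : Matrix (P → ι) (P → ι) K) := by
  ext idx jdx
  simp [tensorPowHom_apply, Finset.prod_mul_distrib]

lemma tensorPowHom_diagonal_mulVec (D : ι → K) (c : (P → ι) → K) (idx : P → ι) :
    (tensorPowHom (diagonal D) *ᵥ c) idx = (∏ k, D k ^ count idx k) * c idx := by
  rw [mulVec, dotProduct, Finset.sum_eq_single idx]
  · simp [tensorPowHom_apply, prod_comp_eq_prod_pow_count]
  · intro jdx _ hne
    obtain ⟨t, ht⟩ := Function.ne_iff.mp (Ne.symm hne)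
    simp [tensorPowHom_apply, Finset.prod_eq_zero (Finset.mem_univ t), diagonal_apply_ne _ ht]
  · simp

lemma count_eq_of_diagonal_mulVec [CharZero K] (w : ι → ℕ) {c : (P → ι) → K}
    (hc : ∀ D : ι → K, (∀ k, D k ≠ 0) →
      tensorPowHom (diagonal D) *ᵥ c = (∏ k, D k ^ w k) • c)
    {idx : P → ι} (hidx : c idx ≠ 0) (k : ι) : count idx k = w k := by
  set D : ι → K := Function.update 1 k 2
  have hD : ∀ k', D k' ≠ 0 := fun k' => by
    by_cases h : k' = k <;> simp [D, h]
  have hprod : ∀ v : ι → ℕ, ∏ k', D k' ^ v k' = 2 ^ v k := fun v => by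
    rw [Finset.prod_eq_single k (fun k' _ hk' => by simp [D, hk']) (by simp)]
    simp [D]
  have h := congrFun (hc D hD) idx
  rw [tensorPowHom_diagonal_mulVec, hprod, Pi.smul_apply, smul_eq_mul, hprod] at h
  exact Nat.pow_right_injective le_rfl (by exact_mod_cast mul_right_cancel₀ hidx h)

lemma tensorPowHom_transvection_apply {a b : ι} (hab : a ≠ b) (s : K) (idx : P → ι)
    (S : Finset P) (hS : S ⊆ univ.filter fun t => idx t = a) :
    tensorPowHom (transvection a b s) idx (S.piecewise (fun _ => b) idx) = s ^ #S := by
  calc ∏ t, transvection a b s (idx t) (S.piecewise (fun _ => b) idx t)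
      = ∏ t, if t ∈ S then s else 1 := by
        refine Finset.prod_congr rfl fun t _ => ?_
        by_cases ht : t ∈ S
        · have hta : idx t = a := (Finset.mem_filter.mp (hS ht)).2
          simp [transvection, ht, hta, hab]
        · simp [transvection, ht, Matrix.single_apply]
          exact fun h1 h2 => absurd (h1.trans h2.symm) hab
    _ = s ^ #S := by rw [Fintype.prod_ite_mem, Finset.prod_const]

lemma tensorPowHom_transvection_apply_eq_zero {a b : ι} (s : K) {idx jdx : P → ι}
    (h : ∀ S ⊆ univ.filter fun t => idx t = a, jdx ≠ S.piecewise (fun _ => b) idx) :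
    tensorPowHom (transvection a b s) idx jdx = 0 := by
  by_contra hne
  have hfac : ∀ t, idx t = jdx t ∨ (idx t = a ∧ jdx t = b) := fun t => by
    have := (Finset.prod_ne_zero_iff.mp hne) t (Finset.mem_univ t)
    by_contra! h'
    simp_all [transvection, Matrix.single_apply]
  refine h (univ.filter fun t => jdx t ≠ idx t) (fun t ht => ?_) (funext fun t => ?_)
  · have hne : jdx t ≠ idx t := (Finset.mem_filter.mp ht).2
    exact Finset.mem_filter.mpr ⟨Finset.mem_univ t, ((hfac t).resolve_left hne.symm).1⟩
  · by_cases ht : jdx t = idx t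
    · simp [ht]
    · simp only [Finset.piecewise, Finset.mem_filter, Finset.mem_univ, true_and, if_pos ht]
      exact ((hfac t).resolve_left (Ne.symm ht)).2

lemma tensorPowHom_transvection_mulVec {a b : ι} (hab : a ≠ b) (s : K) (c : (P → ι) → K)
    (idx : P → ι) : (tensorPowHom (transvection a b s) *ᵥ c) idx
      = ∑ k ∈ range (count idx a + 1), flipSum a b k c idx * s ^ k := by
  have hinj : Set.InjOn (fun S : Finset P => S.piecewise (fun _ => b) idx)
      ((univ.filter fun t => idx t = a).powerset) := by
    intro S hS S' hS' (h : S.piecewise _ idx = S'.piecewise _ idx)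
    ext t
    rw [mem_iff_piecewise_ne hab (Finset.mem_powerset.mp hS),
      mem_iff_piecewise_ne hab (Finset.mem_powerset.mp hS'), h]
  rw [mulVec, dotProduct, ← Finset.sum_of_injOn _ hinj
    (fun _ _ => Finset.mem_coe.mpr (Finset.mem_univ _)) ?_ (fun S _ => rfl), Finset.sum_powerset]
  · refine Finset.sum_congr rfl fun k _ => ?_
    rw [flipSum, Finset.sum_mul]
    refine Finset.sum_congr rfl fun S hS => ?_
    obtain ⟨hSA, hSk⟩ := Finset.mem_powersetCard.mp hS
    rw [tensorPowHom_transvection_apply hab s idx S hSA, hSk, mul_comm]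
  · intro jdx _ hjdx
    rw [tensorPowHom_transvection_apply_eq_zero s fun S hS h =>
      hjdx ⟨S, Finset.mem_coe.mpr (Finset.mem_powerset.mpr hS), h.symm⟩, zero_mul]

lemma transvection_mulVec_eq_self_iff [CharZero K] {a b : ι} (hab : a ≠ b)
    (c : (P → ι) → K) :
    (∀ s : K, tensorPowHom (transvection a b s) *ᵥ c = c) ↔ singleAct a b c = 0 := by
  constructor
  · intro h
    ext idx
    rw [← flipSum_one]
    rcases Nat.lt_or_ge (count idx a) 1 with hk | hk
    · exact flipSum_eq_zero_of_count_lt b c hk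
    refine eq_zero_of_forall_sum_mul_pow_eq_zero (f := fun k => if k = 0 then 0 else
      flipSum a b k c idx) (fun s => ?_) (Nat.lt_succ_of_le hk)
    have hs := congrFun (h s) idx
    rw [tensorPowHom_transvection_mulVec hab, Finset.sum_range_succ', flipSum_zero] at hs
    rw [Finset.sum_range_succ']
    simpa using hs
  · intro h s
    have hvanish : ∀ k, flipSum a b (k + 1) c = 0 := by
      intro k
      induction k with
      | zero => rw [flipSum_one, h]
      | succ k ih =>
        ext idx
        have := singleAct_flipSum hab (k + 1) c idx
        rw [ih, map_zero, Pi.zero_apply] at this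
        exact (mul_eq_zero.mp this.symm).resolve_left (by norm_cast)
    ext idx
    simp [tensorPowHom_transvection_mulVec hab, Finset.sum_range_succ', hvanish, flipSum_zero]

theorem tensorPowHom_mulVec_eq_self_of_det_eq_one [CharZero K] [LinearOrder ι] {d : ℕ}
    {c : (P → ι) → K} (hbal : ∀ idx, c idx ≠ 0 → ∀ k, count idx k = d)
    (hup : ∀ a b : ι, a < b → ∀ s : K, tensorPowHom (transvection a b s) *ᵥ c = c)
    {g : Matrix ι ι K} (hg : g.det = 1) : tensorPowHom g *ᵥ c = c := by
  have hweight : ∀ a b, weightDiff a b c = 0 := fun a b => funext fun idx => by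
    by_cases hc : c idx = 0
    · simp [weightDiff_apply, hc]
    · simp [weightDiff_apply, hbal idx hc]
  have htransvection : ∀ a b : ι, a ≠ b → ∀ s : K,
      tensorPowHom (transvection a b s) *ᵥ c = c := by
    intro a b hab
    rw [transvection_mulVec_eq_self_iff hab]
    rcases hab.lt_or_gt with h | h
    · exact (transvection_mulVec_eq_self_iff hab c).mp (hup a b h)
    · exact singleAct_eq_zero_of_primitive h.ne
        ((transvection_mulVec_eq_self_iff h.ne c).mp (hup b a h)) (hweight b a)
  refine diagonal_transvection_induction (fun M => tensorPowHom M *ᵥ c = c) g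
    (fun D hD => funext fun idx => ?_) (fun t => htransvection t.i t.j t.hij t.c)
    (fun A B hA hB => by simp only [map_mul, ← mulVec_mulVec, hB, hA])
  rw [tensorPowHom_diagonal_mulVec]
  by_cases hc : c idx = 0
  · rw [hc, mul_zero]
  · rw [Finset.prod_congr rfl fun k _ => by rw [hbal idx hc k], Finset.prod_pow, ← det_diagonal,
      hD, hg, one_pow, one_mul]

theorem tensorPowHom_mulVec_eq_det_pow_smul [IsAlgClosed K] [Nonempty ι] {m : ℕ}
    (hP : Fintype.card P = Fintype.card ι * m) {c : (P → ι) → K}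
    (hc : ∀ g : Matrix ι ι K, g.det = 1 → tensorPowHom g *ᵥ c = c)
    {g : Matrix ι ι K} (hg : g.det ≠ 0) : tensorPowHom g *ᵥ c = g.det ^ m • c := by
  obtain ⟨α, hα⟩ := IsAlgClosed.exists_pow_nat_eq g.det (Fintype.card_pos (α := ι))
  have hα0 : α ≠ 0 := by
    rintro rfl
    exact hg (by rw [← hα, zero_pow (Fintype.card_pos (α := ι)).ne'])
  have hdet : (α⁻¹ • g).det = 1 := by
    rw [det_smul, ← hα, inv_pow, inv_mul_cancel₀ (pow_ne_zero _ hα0)]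
  calc tensorPowHom g *ᵥ c = tensorPowHom (α • α⁻¹ • g) *ᵥ c := by
        rw [smul_smul, mul_inv_cancel₀ hα0, one_smul]
    _ = g.det ^ m • c := by
        rw [tensorPowHom_smul, smul_mulVec, hc _ hdet, hP, pow_mul, hα]

end TensorPower

section Truncation

variable {j m n i : ℕ}

def restrictTensor {K P : Type*} (h : i ≤ n) (c : (P → Fin n) → K) : (P → Fin i) → K :=
  fun idx => c (Fin.castLE h ∘ idx)

lemma mem_range_castLE_comp_iff {P : Type*} (h : i ≤ n) (idx : P → Fin n) :
    idx ∈ Set.range (Fin.castLE h ∘ ·) ↔ ∀ t, (idx t : ℕ) < i := by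
  constructor
  · rintro ⟨idx', rfl⟩ t
    exact (idx' t).isLt
  · intro hidx
    exact ⟨fun t => ⟨idx t, hidx t⟩, rfl⟩

lemma count_castLE_comp {P : Type*} [Fintype P] (h : i ≤ n) (idx : P → Fin i) (k : Fin i) :
    count (Fin.castLE h ∘ idx) (Fin.castLE h k) = count idx k := by
  simp [count, Fin.castLE_inj]

lemma prod_filter_lt_eq_prod_castLE {M : Type*} [CommMonoid M] (h : i ≤ n) (f : Fin n → M) :
    ∏ k ∈ univ.filter (fun k : Fin n => (k : ℕ) < i), f k
      = ∏ k : Fin i, f (Fin.castLE h k) := by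
  rw [Finset.prod_filter]
  exact (Fintype.prod_of_injective (Fin.castLE h) (Fin.castLE_injective h) _
    (fun k => if (k : ℕ) < i then f k else 1)
    (fun k hk => if_neg fun hki => hk ⟨⟨k, hki⟩, rfl⟩)
    fun k => (if_pos k.isLt).symm).symm

lemma extTensor_castLE_comp (h : i ≤ n) (c' : ((Fin j × Fin m) → Fin i) → ℂ)
    (idx' : (Fin j × Fin m) → Fin i) : extTensor h c' (Fin.castLE h ∘ idx') = c' idx' := by
  simp [extTensor]

lemma extTensor_apply_of_le (h : i ≤ n) (c' : ((Fin j × Fin m) → Fin i) → ℂ)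
    {idx : (Fin j × Fin m) → Fin n} {t : Fin j × Fin m} (ht : i ≤ (idx t : ℕ)) :
    extTensor h c' idx = 0 :=
  dif_neg fun hidx => (hidx t).not_ge ht

lemma extTensor_apply_of_notMem_range (h : i ≤ n) (c' : ((Fin j × Fin m) → Fin i) → ℂ)
    {idx : (Fin j × Fin m) → Fin n} (hidx : idx ∉ Set.range (Fin.castLE h ∘ ·)) :
    extTensor h c' idx = 0 := by
  rw [mem_range_castLE_comp_iff, not_forall] at hidx
  obtain ⟨t, ht⟩ := hidx
  exact extTensor_apply_of_le h c' (not_lt.mp ht)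

lemma restrictTensor_extTensor (h : i ≤ n) (c' : ((Fin j × Fin m) → Fin i) → ℂ) :
    restrictTensor h (extTensor h c') = c' :=
  funext (extTensor_castLE_comp h c')

lemma extTensor_restrictTensor (h : i ≤ n) {c : ((Fin j × Fin m) → Fin n) → ℂ}
    (hc : ∀ idx, c idx ≠ 0 → ∀ t, (idx t : ℕ) < i) :
    extTensor h (restrictTensor h c) = c := by
  funext idx
  by_cases hidx : ∀ t, (idx t : ℕ) < i
  · obtain ⟨idx', rfl⟩ := (mem_range_castLE_comp_iff h idx).mpr hidx
    exact extTensor_castLE_comp h _ idx'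
  · obtain ⟨t, ht⟩ := not_forall.mp hidx
    rw [not_lt] at ht
    rw [extTensor_apply_of_le h _ ht]
    by_contra hne
    exact (hc idx (Ne.symm hne) t).not_ge ht

lemma extTensor_smul (h : i ≤ n) (a : ℂ) (c' : ((Fin j × Fin m) → Fin i) → ℂ) :
    extTensor h (a • c') = a • extTensor h c' := by
  funext idx
  by_cases hidx : ∀ t, (idx t : ℕ) < i <;> simp [extTensor, hidx]

lemma extTensor_zero (h : i ≤ n) :
    extTensor h (0 : ((Fin j × Fin m) → Fin i) → ℂ) = 0 := by
  funext idx
  simp [extTensor]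

lemma extTensor_ne_zero (h : i ≤ n) {c' : ((Fin j × Fin m) → Fin i) → ℂ} (hc' : c' ≠ 0) :
    extTensor h c' ≠ 0 := fun h0 =>
  hc' (by rw [← restrictTensor_extTensor h c', h0]; rfl)

lemma matAct_extTensor (h : i ≤ n) {g : Matrix (Fin n) (Fin n) ℂ}
    (hg : ∀ x y : Fin n, (y : ℕ) < i → i ≤ (x : ℕ) → g x y = 0)
    (c' : ((Fin j × Fin m) → Fin i) → ℂ) :
    matAct g (extTensor h c')
      = extTensor h (matAct (g.submatrix (Fin.castLE h) (Fin.castLE h)) c') := by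
  have hsum : ∀ idx, matAct g (extTensor h c') idx
      = ∑ jdx', (∏ t, g (idx t) (Fin.castLE h (jdx' t))) * c' jdx' := fun idx =>
    (Fintype.sum_of_injective (Fin.castLE h ∘ ·) (Fin.castLE_injective h).comp_left _ _
      (fun jdx hjdx => by rw [extTensor_apply_of_notMem_range h c' hjdx, mul_zero])
      (fun jdx' => by rw [extTensor_castLE_comp]; rfl)).symm
  funext idx
  rw [hsum]
  by_cases hidx : ∀ t, (idx t : ℕ) < i
  · obtain ⟨idx', rfl⟩ := (mem_range_castLE_comp_iff h idx).mpr hidx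
    rw [extTensor_castLE_comp]
    rfl
  · obtain ⟨t, ht⟩ := not_forall.mp hidx
    rw [not_lt] at ht
    rw [extTensor_apply_of_le h _ ht]
    exact Finset.sum_eq_zero fun jdx' _ => by
      rw [Finset.prod_eq_zero (Finset.mem_univ t) (hg _ _ (jdx' t).isLt ht), zero_mul]

lemma hInv_restrictTensor (h : i ≤ n) {c : ((Fin j × Fin m) → Fin n) → ℂ} (hc : HInv c) :
    HInv (restrictTensor h c) :=
  fun π ρ idx => hc π ρ (Fin.castLE h ∘ idx)

lemma hInv_extTensor (h : i ≤ n) {c' : ((Fin j × Fin m) → Fin i) → ℂ} (hc' : HInv c') :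
    HInv (extTensor h c') := by
  intro π ρ idx
  by_cases hidx : ∀ t, (idx t : ℕ) < i
  · obtain ⟨idx', rfl⟩ := (mem_range_castLE_comp_iff h idx).mpr hidx
    exact (extTensor_castLE_comp h c' fun ab => idx' (π ab.1, ρ ab.1 ab.2)).trans
      ((hc' π ρ idx').trans (extTensor_castLE_comp h c' idx').symm)
  · obtain ⟨t, ht⟩ := not_forall.mp hidx
    rw [not_lt] at ht
    rw [extTensor_apply_of_le h c' ht,
      extTensor_apply_of_le h c' (t := (π.symm t.1, (ρ (π.symm t.1)).symm t.2))
        (by simpa using ht)]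

end Truncation

section HighestWeightVectors

variable {j m n i d : ℕ}

lemma isUT_diagonal {D : Fin n → ℂ} (hD : ∀ k, D k ≠ 0) : IsUT (diagonal D) :=
  ⟨fun _ _ hba => diagonal_apply_ne D hba.ne',
    by simp [det_diagonal, Finset.prod_ne_zero_iff, hD]⟩

lemma diag_ne_zero_of_isUT {g : Matrix (Fin n) (Fin n) ℂ} (hg : IsUT g) (k : Fin n) :
    g k k ≠ 0 := by
  have hdet := hg.2.ne_zero
  rw [det_of_isUpperTriangular fun x y h => hg.1 x y h] at hdet
  exact Finset.prod_ne_zero_iff.mp hdet k (Finset.mem_univ k)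

lemma wtChar_diagonal (D : Fin n → ℂ) :
    wtChar i d (diagonal D) = ∏ k, D k ^ (if (k : ℕ) < i then d else 0) := by
  simp only [wtChar, diagonal_apply_eq, ← Finset.prod_pow, Finset.prod_filter]
  exact Finset.prod_congr rfl fun k _ => by split_ifs <;> simp

lemma isUT_transvection {a b : Fin n} (hab : a < b) (s : ℂ) : IsUT (transvection a b s) := by
  refine ⟨fun x y hyx => ?_, by simp [det_transvection_of_ne _ _ hab.ne]⟩
  simp only [transvection, Matrix.add_apply, one_apply_ne hyx.ne', single_apply, zero_add]
  exact if_neg fun ⟨hx, hy⟩ => lt_asymm hab (hx ▸ hy ▸ hyx)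

lemma wtChar_transvection {a b : Fin n} (hab : a ≠ b) (s : ℂ) :
    wtChar i d (transvection a b s) = 1 := by
  have hdiag : ∀ k, transvection a b s k k = 1 := fun k => by
    simp only [transvection, Matrix.add_apply, one_apply_eq, single_apply]
    rw [if_neg fun ⟨ha, hb⟩ => hab (ha.trans hb.symm), add_zero]
  simp [wtChar, hdiag]

lemma submatrix_castLE_transvection (h : i ≤ n) (a b : Fin i) (s : ℂ) :
    (transvection (Fin.castLE h a) (Fin.castLE h b) s).submatrix (Fin.castLE h) (Fin.castLE h)
      = transvection a b s := by
  ext x y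
  simp [transvection, single_apply, one_apply, Fin.castLE_inj]

lemma zero_mem_eigSet : (0 : ((Fin j × Fin m) → Fin n) → ℂ) ∈ EigSet m n j d i :=
  ⟨fun _ _ _ => rfl, fun g _ => by simp [matAct_eq_mulVec]⟩

lemma smul_mem_eigSet {c : ((Fin j × Fin m) → Fin n) → ℂ} (hc : c ∈ EigSet m n j d i)
    (a : ℂ) :
    a • c ∈ EigSet m n j d i :=
  ⟨fun π ρ idx => by simp only [Pi.smul_apply, hc.1 π ρ idx],
    fun g hg => by rw [matAct_eq_mulVec, mulVec_smul, ← matAct_eq_mulVec, hc.2 g hg, smul_comm]⟩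

lemma count_of_mem_eigSet {c : ((Fin j × Fin m) → Fin n) → ℂ} (hc : c ∈ EigSet m n j d i)
    {idx : (Fin j × Fin m) → Fin n} (hidx : c idx ≠ 0) (k : Fin n) :
    count idx k = if (k : ℕ) < i then d else 0 :=
  count_eq_of_diagonal_mulVec _ (fun D hD => by
    rw [← matAct_eq_mulVec, hc.2 _ (isUT_diagonal hD), wtChar_diagonal]) hidx k

lemma lt_of_mem_eigSet {c : ((Fin j × Fin m) → Fin n) → ℂ} (hc : c ∈ EigSet m n j d i)
    {idx : (Fin j × Fin m) → Fin n} (hidx : c idx ≠ 0) (t : Fin j × Fin m) :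
    (idx t : ℕ) < i := by
  have hcount := count_of_mem_eigSet hc hidx (idx t)
  have hpos : 0 < count idx (idx t) := Finset.card_pos.mpr ⟨t, by simp⟩
  by_contra hlt
  rw [if_neg hlt] at hcount
  omega

lemma mul_eq_mul_of_mem_eigSet (hin : i ≤ n) {c : ((Fin j × Fin m) → Fin n) → ℂ}
    (hc : c ∈ EigSet m n j d i) (hne : c ≠ 0) : j * m = i * d := by
  obtain ⟨idx, hidx⟩ := Function.ne_iff.mp hne
  have hsum := sum_count idx
  simp only [count_of_mem_eigSet hc hidx, Finset.sum_ite, Finset.sum_const_zero, add_zero,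
    Finset.sum_const, smul_eq_mul, Fin.card_filter_val_lt, Fintype.card_prod,
    Fintype.card_fin, min_eq_right hin] at hsum
  exact hsum.symm

lemma extTensor_restrictTensor_of_mem_eigSet (hin : i ≤ n)
    {c : ((Fin j × Fin m) → Fin n) → ℂ} (hc : c ∈ EigSet m n j d i) :
    extTensor hin (restrictTensor hin c) = c :=
  extTensor_restrictTensor hin fun _ hidx => lt_of_mem_eigSet hc hidx

lemma restrictTensor_mem_SLInvSet (hin : i ≤ n) {c : ((Fin j × Fin m) → Fin n) → ℂ}
    (hc : c ∈ EigSet m n j d i) : restrictTensor hin c ∈ SLInvSet m i j := by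
  refine ⟨hInv_restrictTensor hin hc.1, fun g hg => ?_⟩
  refine tensorPowHom_mulVec_eq_self_of_det_eq_one (d := d) (fun idx hidx k => ?_)
    (fun a b hab s => ?_) hg
  · rw [← count_castLE_comp hin, count_of_mem_eigSet hc hidx,
      if_pos (show (Fin.castLE hin k : ℕ) < i from k.isLt)]
  · have hG := hc.2 _ (isUT_transvection ((Fin.castLE_lt_castLE_iff hin).mpr hab) s)
    rw [wtChar_transvection (Fin.castLE_injective hin |>.ne hab.ne), one_smul,
      ← extTensor_restrictTensor_of_mem_eigSet hin hc, matAct_extTensor hin ?_,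
      submatrix_castLE_transvection] at hG
    · simpa [restrictTensor_extTensor, matAct_eq_mulVec] using congrArg (restrictTensor hin) hG
    · intro x y hy hx
      have hax : Fin.castLE hin a ≠ x := fun h => (h ▸ a.isLt : (x : ℕ) < i).not_ge hx
      simp [transvection, hax, one_apply_ne (fun h : x = y => (h ▸ hy).not_ge hx)]

lemma extTensor_mem_eigSet (hi : 1 ≤ i) (hin : i ≤ n)
    {c₀ : ((Fin i × Fin m) → Fin i) → ℂ} (hc₀ : c₀ ∈ SLInvSet m i i) :
    extTensor hin c₀ ∈ EigSet m n i m i := by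
  refine ⟨hInv_extTensor hin hc₀.1, fun g hg => ?_⟩
  have hupper : (g.submatrix (Fin.castLE hin) (Fin.castLE hin)).IsUpperTriangular :=
    fun x y hyx => hg.1 _ _ hyx
  have hdet : (g.submatrix (Fin.castLE hin) (Fin.castLE hin)).det
      = ∏ k ∈ univ.filter (fun k : Fin n => (k : ℕ) < i), g k k := by
    rw [det_of_isUpperTriangular hupper, prod_filter_lt_eq_prod_castLE hin]
    rfl
  have hdet0 : (g.submatrix (Fin.castLE hin) (Fin.castLE hin)).det ≠ 0 := by
    rw [hdet]
    exact Finset.prod_ne_zero_iff.mpr fun k _ => diag_ne_zero_of_isUT hg k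
  have : Nonempty (Fin i) := ⟨⟨0, hi⟩⟩
  rw [matAct_extTensor hin (fun x y hy hx => hg.1 x y (hy.trans_le hx)), matAct_eq_mulVec,
    tensorPowHom_mulVec_eq_det_pow_smul (m := m) (by simp) (fun g' hg' => hc₀.2 g' hg') hdet0,
    extTensor_smul, hdet, wtChar]

end HighestWeightVectors

end HighestWeight

theorem smallest_d_is_m_and_multiplicity_one_general (n m i : ℕ)
    (hm : 0 < m) (hi1 : 1 ≤ i) (hin : i ≤ n)
    (howe1 : ∀ ν jj : ℕ, 0 < jj → jj < ν → SLInvSet m ν jj = {0})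
    (howe2 : ∀ ν : ℕ, 0 < ν →
      ∃ c₀ ∈ SLInvSet m ν ν, c₀ ≠ 0 ∧ SLInvSet m ν ν = {x | ∃ t : ℂ, x = t • c₀}) :
    (∀ d j : ℕ, 0 < d → d < m → 0 < j → EigSet m n j d i = {0}) ∧
    (∃ c₀ ∈ EigSet m n i m i, c₀ ≠ 0 ∧ EigSet m n i m i = {x | ∃ t : ℂ, x = t • c₀}) ∧
    (∀ j : ℕ, 0 < j → j ≠ i → EigSet m n j m i = {0}) := by
  open HighestWeight in
  refine ⟨fun d j _ hdm hj => ?_, ?_, fun j _ hji => ?_⟩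
  · refine Set.eq_singleton_iff_unique_mem.mpr ⟨zero_mem_eigSet, fun c hc => ?_⟩
    by_contra hne
    have hji : j < i := Nat.lt_of_mul_lt_mul_right
      ((mul_eq_mul_of_mem_eigSet hin hc hne).trans_lt (Nat.mul_lt_mul_of_pos_left hdm hi1))
    have hres := restrictTensor_mem_SLInvSet hin hc
    rw [howe1 i j hj hji, Set.mem_singleton_iff] at hres
    exact hne (by rw [← extTensor_restrictTensor_of_mem_eigSet hin hc, hres, extTensor_zero])
  · obtain ⟨c₀, hc₀, hc₀0, hline⟩ := howe2 i hi1
    refine ⟨extTensor hin c₀, extTensor_mem_eigSet hi1 hin hc₀, extTensor_ne_zero hin hc₀0,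
      Set.ext fun c => ⟨fun hc => ?_, ?_⟩⟩
    · obtain ⟨t, ht⟩ : restrictTensor hin c ∈ {x | ∃ t : ℂ, x = t • c₀} :=
        hline ▸ restrictTensor_mem_SLInvSet hin hc
      exact ⟨t, by rw [← extTensor_restrictTensor_of_mem_eigSet hin hc, ht, extTensor_smul]⟩
    · rintro ⟨t, rfl⟩
      exact smul_mem_eigSet (extTensor_mem_eigSet hi1 hin hc₀) t
  · refine Set.eq_singleton_iff_unique_mem.mpr ⟨zero_mem_eigSet, fun c hc => ?_⟩
    by_contra hne
    exact hji (Nat.eq_of_mul_eq_mul_right hm (mul_eq_mul_of_mem_eigSet hin hc hne))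

/-- Let `m` be a positive even integer, `E = ℂ^n`, `1 ≤ i ≤ n`.  Granting Howe's result —
`[S^jj(S^m(W))]^{SL(W)} = 0` for `0 < jj < dim W`, and one-dimensional for `jj = dim W`
(`m` even) — the smallest positive `d` such that `V_E(dδ_i)` occurs in `S^•(S^m(E))` is
`d = m`: for `0 < d < m` no highest weight vector of weight `dδ_i` exists in any degree;
`V_E(mδ_i)` occurs, with multiplicity exactly one, in degree `i`; and it occurs in no
other degree. -/
theorem smallest_d_is_m_and_multiplicity_one (n m i : ℕ)
    (hm : 0 < m) (heven : Even m) (hi1 : 1 ≤ i) (hin : i ≤ n)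
    (howe1 : ∀ ν jj : ℕ, 0 < jj → jj < ν → SLInvSet m ν jj = {0})
    (howe2 : ∀ ν : ℕ, 0 < ν →
      ∃ c₀ ∈ SLInvSet m ν ν, c₀ ≠ 0 ∧ SLInvSet m ν ν = {x | ∃ t : ℂ, x = t • c₀}) :
    (∀ d j : ℕ, 0 < d → d < m → 0 < j → EigSet m n j d i = {0}) ∧
    (∃ c₀ ∈ EigSet m n i m i, c₀ ≠ 0 ∧ EigSet m n i m i = {x | ∃ t : ℂ, x = t • c₀}) ∧
    (∀ j : ℕ, 0 < j → j ≠ i → EigSet m n j m i = {0}) :=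
  smallest_d_is_m_and_multiplicity_one_general n m i hm hi1 hin howe1 howe2
end

section
/- Let m be even, 1 ≤ i ≤ m, V_m = ℂ^m, v_o ∈ S^m(V_m*) the symmetrization of v*_1⊗···⊗v*_m, 𝔳_o ∈ S^m(V_m) the symmetrization of v_1⊗···⊗v_m, and B_o the rectangular tableau of shape (m^i) filled with 1,...,im row by row, with S(B_o) = (∑_{μ∈Col(B_o)} sgn(μ) μ)·(∑_{σ∈Row(B_o)} σ) the associated Young symmetrizer element of ℂ[S_{im}] acting on ⊗^{im} V_m. Then ⟨v_o^{⊗i}, S(B_o)·𝔳_o^{⊗i}⟩ = (1/m!)^i · ∑_{𝒜 ∈ S(i,m)} (#L^+_𝒜 − #L^−_𝒜)^2, where the sum runs over all patterns 𝒜 of size (i,m) and L^±_𝒜 are the column-even/odd Latin (i,m)-rectangles with pattern 𝒜. -/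
open Finset

/-- The element of the column group of the rectangular tableau `B_o` (with rows indexed by
`Fin i` and columns by `Fin m`) determined by `μ : Fin m → S_i`: the permutation
`(a,b) ↦ (μ_b a, b)` of the tensor positions. -/
def colPerm {i m : ℕ} (μ : Fin m → Equiv.Perm (Fin i)) : Equiv.Perm (Fin i × Fin m) :=
  ((Equiv.prodComm (Fin i) (Fin m)).trans
    (Equiv.prodShear (Equiv.refl (Fin m)) μ)).trans (Equiv.prodComm (Fin m) (Fin i))

/-- The element of the row group of `B_o` determined by `ρ : Fin i → S_m`: the permutation
`(a,b) ↦ (a, ρ_a b)`. -/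
def rowPerm {i m : ℕ} (ρ : Fin i → Equiv.Perm (Fin m)) : Equiv.Perm (Fin i × Fin m) :=
  Equiv.prodShear (Equiv.refl (Fin i)) ρ

open scoped Classical in
/-- The coordinates of `v_o^{⊗ i}` (equally of `𝔳_o^{⊗ i}`) in `⊗^{im} ℂ^m`, the tensor
positions being indexed by `Fin i × Fin m`: `v_o` is the symmetrization
`(1/m!) ∑_σ v_{σ(1)} ⊗ ⋯ ⊗ v_{σ(m)}`, so the coefficient of the basis vector indexed by
`idx` is `(1/m!)^i` if every row `b ↦ idx (a, b)` is a bijection, and `0` otherwise. -/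
noncomputable def symPowCoef (i m : ℕ) : ((Fin i × Fin m) → Fin m) → ℂ :=
  fun idx =>
    if ∀ a : Fin i, Function.Bijective (fun b => idx (a, b)) then
      ((m.factorial : ℂ))⁻¹ ^ i
    else 0

/- Averaging over the row group replaces the coefficient of `𝔳_o^{⊗i}` by the indicator that every
row is a permutation, so the pairing is `(1/m!)^i` times the signed count of pairs `(A, μ)`: `A` an
`i × m` array with permutation rows, `μ` a column permutation keeping the rows permutations. If a
column of `A` repeats an entry, the transposition of the two positions is a sign-reversing
symmetry and these terms cancel. If `A` is Latin, `μ ↦ A ∘ μ` is a bijection onto the Latin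
rectangles `B` with the pattern of `A`, and `sgn μ = ε_c(A) ε_c(B)` because column signs are signs
of Vandermonde determinants. Grouping by pattern gives `∑_𝒜 (∑_B ε_c(B))² = ∑_𝒜 (#L⁺ − #L⁻)²`. -/

open Equiv Function

theorem sum_filter_coe_eq_zero_of_map_eq_neg_one {G : Type*} [Group G] [Fintype G]
    (χ : G →* ℤˣ) {h : G} (hχ : χ h = -1) (P : G → Prop) [DecidablePred P]
    (hP : ∀ g, P (h * g) ↔ P g) :
    ∑ g ∈ Finset.univ.filter P, (χ g : ℤ) = 0 := by
  rw [Finset.sum_filter]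
  have hneg :
      ∑ g, (if P g then (χ g : ℤ) else 0) = -∑ g, (if P g then (χ g : ℤ) else 0) := calc
    _ = ∑ g, (if P (h * g) then (χ (h * g) : ℤ) else 0) :=
      (Equiv.sum_comp (Equiv.mulLeft h) fun g => if P g then (χ g : ℤ) else 0).symm
    _ = ∑ g, -(if P g then (χ g : ℤ) else 0) := by
      refine Finset.sum_congr rfl fun g _ => ?_
      split_ifs <;> simp_all
    _ = _ := Finset.sum_neg_distrib _
  omega

section ColPermute

variable {ι κ α : Type*}

def colPermute (μ : κ → Perm ι) (A : ι → κ → α) : ι → κ → α :=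
  fun p q => A (μ q p) q

theorem colPermute_mul (μ ν : κ → Perm ι) (A : ι → κ → α) :
    colPermute (μ * ν) A = colPermute ν (colPermute μ A) := rfl

variable [DecidableEq ι]

theorem colPermute_mulSingle_swap [DecidableEq κ] {A : ι → κ → α} {q : κ} {p p' : ι}
    (h : A p q = A p' q) : colPermute (Pi.mulSingle q (Equiv.swap p p')) A = A := by
  funext r s
  rcases eq_or_ne s q with rfl | hs
  · simp only [colPermute, Pi.mulSingle_eq_same]
    rcases eq_or_ne r p with rfl | hrp
    · simpa using h.symm
    rcases eq_or_ne r p' with rfl | hrp'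
    · simpa using h
    · rw [Equiv.swap_apply_of_ne_of_ne hrp hrp']
  · simp [colPermute, Pi.mulSingle_eq_of_ne hs]

variable [Fintype ι] [Fintype κ]

def prodSign : (κ → Perm ι) →* ℤˣ :=
  ∏ q, Perm.sign.comp (Pi.evalMonoidHom _ q)

theorem prodSign_apply (μ : κ → Perm ι) : prodSign μ = ∏ q, Perm.sign (μ q) := by
  simp [prodSign, MonoidHom.finsetProd_apply]

theorem prodSign_mulSingle_swap [DecidableEq κ] (q : κ) {p p' : ι} (h : p ≠ p') :
    prodSign (Pi.mulSingle q (Equiv.swap p p')) = -1 := by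
  rw [prodSign_apply, Fintype.prod_eq_single q]
  · simp [Perm.sign_swap h]
  · intro r hr; simp [Pi.mulSingle_eq_of_ne hr]

theorem sum_prodSign_colPermute_eq_zero [DecidableEq κ] {A : ι → κ → α} {q : κ}
    (hA : ¬ Injective fun p => A p q) (S : (ι → κ → α) → Prop) [DecidablePred S] :
    ∑ μ ∈ Finset.univ.filter (fun μ => S (colPermute μ A)), (prodSign μ : ℤ) = 0 := by
  obtain ⟨p, p', hpp', hne⟩ := not_injective_iff.mp hA
  refine sum_filter_coe_eq_zero_of_map_eq_neg_one prodSign (prodSign_mulSingle_swap q hne) _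
    fun μ => ?_
  rw [colPermute_mul, colPermute_mulSingle_swap hpp']

end ColPermute

theorem exists_perm_comp_eq_of_range_subset {ι α : Type*} [Finite ι] {u v : ι → α}
    (hv : Injective v) (h : Set.range v ⊆ Set.range u) : ∃ σ : Perm ι, u ∘ σ = v := by
  choose f hf using fun p => h ⟨p, rfl⟩
  have hf_inj : Injective f := fun a b hab => hv (by rw [← hf a, ← hf b, hab])
  exact ⟨Equiv.ofBijective f (Finite.injective_iff_bijective.mp hf_inj), funext hf⟩

section LatinRect

variable {i m : ℕ}

theorem colSign_eq_prod_sign_det_vandermonde (A : Fin i → Fin m → Fin m) :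
    colSign A = ∏ q, (Matrix.vandermonde fun p => ((A p q : ℕ) : ℤ)).det.sign := by
  simp only [colSign, Matrix.det_vandermonde, Finset.filter_lt_eq_Ioi]

theorem colSign_colPermute (μ : Fin m → Perm (Fin i)) (A : Fin i → Fin m → Fin m) :
    colSign (colPermute μ A) = prodSign μ * colSign A := by
  simp only [colSign_eq_prod_sign_det_vandermonde, prodSign_apply, Units.coe_prod,
    ← Finset.prod_mul_distrib]
  refine Finset.prod_congr rfl fun q _ => ?_
  have hsub : Matrix.vandermonde (fun p => (((colPermute μ A p q : Fin m) : ℕ) : ℤ))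
      = (Matrix.vandermonde fun p => ((A p q : ℕ) : ℤ)).submatrix (μ q) id := rfl
  rw [hsub, Matrix.det_permute, Int.sign_mul]
  rcases Int.units_eq_one_or (Perm.sign (μ q)) with h | h <;> simp [h]

theorem colSign_mul_self {A : Fin i → Fin m → Fin m} (hA : ∀ q, Injective fun p => A p q) :
    colSign A * colSign A = 1 := by
  rw [colSign_eq_prod_sign_det_vandermonde, ← Finset.prod_mul_distrib]
  refine Finset.prod_eq_one fun q _ => ?_
  have hdet : (Matrix.vandermonde fun p => ((A p q : ℕ) : ℤ)).det ≠ 0 :=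
    Matrix.det_vandermonde_ne_zero_iff.mpr
    (((Nat.cast_injective (R := ℤ)).comp Fin.val_injective).comp (hA q))
  rw [← Int.sign_mul, Int.sign_eq_one_of_pos (mul_self_pos.mpr hdet)]

theorem patternOf_colPermute (μ : Fin m → Perm (Fin i)) (A : Fin i → Fin m → Fin m) :
    patternOf (colPermute μ A) = patternOf A := by
  funext q
  simp only [patternOf, colPermute]
  rw [show (fun p => A (μ q p) q) = (fun p => A p q) ∘ μ q from rfl, ← Finset.image_image,
    Finset.image_univ_equiv]

theorem isPattern_patternOf {A : Fin i → Fin m → Fin m} (hA : IsLatinRect A) :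
    IsPattern i (patternOf A) := by
  refine ⟨fun q => by simp [patternOf, Finset.card_image_of_injective _ (hA.2 q)], fun x => ?_⟩
  let e : Fin i → Fin m := fun p => (Equiv.ofBijective _ (hA.1 p)).symm x
  have he : ∀ p, A p (e p) = x := fun p => Equiv.ofBijective_apply_symm_apply _ _ x
  have he_inj : Injective e := fun a b hab => hA.2 (e a) ((he a).trans (hab ▸ he b).symm)
  have hfilter : Finset.univ.filter (fun q => x ∈ patternOf A q) = Finset.univ.image e := by
    ext q
    simp only [patternOf, Finset.mem_filter, Finset.mem_image, Finset.mem_univ, true_and]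
    constructor
    · rintro ⟨p, rfl⟩; exact ⟨p, (hA.1 p).1 (he p)⟩
    · rintro ⟨p, rfl⟩; exact ⟨p, he p⟩
  rw [hfilter, Finset.card_image_of_injective _ he_inj, Finset.card_univ, Fintype.card_fin]

open scoped Classical in
theorem sum_prodSign_colPermute_of_isLatinRect {A : Fin i → Fin m → Fin m}
    (hA : IsLatinRect A) :
    ∑ μ ∈ univ.filter (fun μ => ∀ p, Bijective (colPermute μ A p)), (prodSign μ : ℤ)
      = ∑ B ∈ Finset.univ.filter
          (fun B : Fin i → Fin m → Fin m => IsLatinRect B ∧ patternOf B = patternOf A),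
          colSign A * colSign B := by
  refine Finset.sum_nbij (colPermute · A) ?_ ?_ ?_ ?_
  · intro μ hμ
    simp only [Finset.mem_filter, Finset.mem_univ, true_and] at hμ ⊢
    exact ⟨⟨hμ, fun q => (hA.2 q).comp (μ q).injective⟩, patternOf_colPermute μ A⟩
  · intro μ _ ν _ hμν
    funext q
    exact Equiv.ext fun p => hA.2 q (congrFun (congrFun hμν p) q)
  · intro B hB
    simp only [Finset.coe_filter, Finset.mem_univ, true_and, Set.mem_ofPred_eq] at hB
    have hcol : ∀ q, ∃ σ : Perm (Fin i), (fun p => A p q) ∘ σ = fun p => B p q := by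
      intro q
      refine exists_perm_comp_eq_of_range_subset (hB.1.2 q) ?_
      rintro _ ⟨p, rfl⟩
      have hmem : B p q ∈ patternOf A q := hB.2 ▸ Finset.mem_image_of_mem _ (Finset.mem_univ p)
      simpa [patternOf] using hmem
    choose μ hμ using hcol
    have hμA : colPermute μ A = B := funext fun p => funext fun q => congrFun (hμ q) p
    refine ⟨μ, ?_, hμA⟩
    simpa [hμA] using hB.1.1
  · intro μ _
    rw [colSign_colPermute, mul_left_comm, colSign_mul_self hA.2, mul_one]

end LatinRect

section SignedCount

open scoped Classical

noncomputable def signedLatinCount (i : ℕ) {m : ℕ} (P : Fin m → Finset (Fin m)) : ℤ :=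
  ∑ B ∈ univ.filter (fun B : Fin i → Fin m → Fin m => IsLatinRect B ∧ patternOf B = P),
    colSign B

variable {i m : ℕ}

theorem signedLatinCount_eq_sub (P : Fin m → Finset (Fin m)) :
    signedLatinCount i P = Lpos i P - Lneg i P := by
  have hcard : ∀ ε : ℤ, Nat.card {A : Fin i → Fin m → Fin m //
        IsLatinRect A ∧ patternOf A = P ∧ colSign A = ε}
      = ∑ B ∈ Finset.univ.filter (fun B : Fin i → Fin m → Fin m =>
          IsLatinRect B ∧ patternOf B = P), if colSign B = ε then 1 else 0 := by
    intro ε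
    rw [Nat.card_eq_fintype_card, Fintype.card_subtype, Finset.sum_boole, Finset.filter_filter]
    simp only [and_assoc, Nat.cast_id]
  rw [Lpos, Lneg, hcard, hcard, signedLatinCount]
  push_cast
  rw [← Finset.sum_sub_distrib]
  refine Finset.sum_congr rfl fun B hB => ?_
  have hB := (Finset.mem_filter.mp hB).2.1
  rcases Int.eq_one_or_neg_one_of_mul_eq_one (colSign_mul_self hB.2) with h | h <;> simp [h]

theorem sum_sum_prodSign_colPermute_eq_sum_sq :
    ∑ A ∈ Finset.univ.filter (fun A : Fin i → Fin m → Fin m => ∀ p, Bijective (A p)),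
      ∑ μ ∈ univ.filter (fun μ => ∀ p, Bijective (colPermute μ A p)), (prodSign μ : ℤ)
      = ∑ P ∈ Finset.univ.filter (fun P : Fin m → Finset (Fin m) => IsPattern i P),
          signedLatinCount i P ^ 2 := by
  have hlatin : Finset.univ.filter (fun A : Fin i → Fin m → Fin m => IsLatinRect A)
      ⊆ Finset.univ.filter (fun A : Fin i → Fin m → Fin m => ∀ p, Bijective (A p)) :=
    fun A => by simpa only [Finset.mem_filter] using fun h => ⟨h.1, h.2.1⟩
  calc _ = ∑ A ∈ Finset.univ.filter (fun A : Fin i → Fin m → Fin m => IsLatinRect A),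
          colSign A * signedLatinCount i (patternOf A) := by
        rw [← Finset.sum_subset hlatin]
        · refine Finset.sum_congr rfl fun A hA => ?_
          rw [sum_prodSign_colPermute_of_isLatinRect (Finset.mem_filter.mp hA).2,
            signedLatinCount, Finset.mul_sum]
        · intro A hrows hA
          simp only [Finset.mem_filter, Finset.mem_univ, true_and] at hrows hA
          obtain ⟨q, hq⟩ := not_forall.mp fun hcols => hA ⟨hrows, hcols⟩
          exact sum_prodSign_colPermute_eq_zero hq fun B => ∀ p, Bijective (B p)
    _ = ∑ P ∈ univ.filter (fun P : Fin m → Finset (Fin m) => IsPattern i P),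
          ∑ A ∈ univ.filter (fun A : Fin i → Fin m → Fin m => IsLatinRect A ∧ patternOf A = P),
          colSign A * signedLatinCount i P := by
        rw [← Finset.sum_fiberwise_of_maps_to (g := patternOf) (t := Finset.univ.filter _)
          fun A hA => Finset.mem_filter.mpr ⟨Finset.mem_univ _,
            isPattern_patternOf (Finset.mem_filter.mp hA).2⟩]
        refine Finset.sum_congr rfl fun P _ => ?_
        rw [Finset.filter_filter]
        exact Finset.sum_congr rfl fun A hA => by rw [(Finset.mem_filter.mp hA).2.2]
    _ = _ := Finset.sum_congr rfl fun P _ => by rw [← Finset.sum_mul, sq]; rfl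

end SignedCount

section Coordinates

open scoped Classical

variable {i m : ℕ}

theorem symPowCoef_eq (idx : Fin i × Fin m → Fin m) :
    symPowCoef i m idx
      = ((m.factorial : ℂ))⁻¹ ^ i * if ∀ p, Bijective (curry idx p) then 1 else 0 := by
  rw [symPowCoef, mul_ite, mul_one, mul_zero]
  rfl

theorem symPowCoef_comp_rowPerm (idx : Fin i × Fin m → Fin m) (ρ : Fin i → Perm (Fin m)) :
    symPowCoef i m (idx ∘ rowPerm ρ) = symPowCoef i m idx := by
  simp only [symPowCoef_eq]
  congr 2
  exact propext <| forall_congr' fun p => Bijective.of_comp_iff (curry idx p) (ρ p).bijective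

theorem curry_comp_colPerm (idx : Fin i × Fin m → Fin m) (μ : Fin m → Perm (Fin i)) :
    curry (idx ∘ colPerm μ) = colPermute μ (curry idx) := rfl

theorem sum_symPowCoef_comp_colPerm_mul_rowPerm (idx : Fin i × Fin m → Fin m)
    (μ : Fin m → Perm (Fin i)) :
    ∑ ρ : Fin i → Perm (Fin m), symPowCoef i m (idx ∘ ⇑(colPerm μ * rowPerm ρ))
      = if ∀ p, Bijective (colPermute μ (curry idx) p) then 1 else 0 := by
  simp only [Perm.coe_mul, ← Function.comp_assoc, symPowCoef_comp_rowPerm]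
  rw [Finset.sum_const, Finset.card_univ, Fintype.card_fun, Fintype.card_perm, Fintype.card_fin,
    Fintype.card_fin, nsmul_eq_mul, symPowCoef_eq, curry_comp_colPerm, ← mul_assoc, Nat.cast_pow,
    ← mul_pow, mul_inv_cancel₀ (by exact_mod_cast m.factorial_ne_zero), one_pow, one_mul]

end Coordinates

open scoped Classical in
theorem pairing_youngSymmetrizer_eq_latin_sum_general (i m : ℕ) :
    ∑ idx : (Fin i × Fin m) → Fin m, symPowCoef i m idx *
        (∑ μ : Fin m → Equiv.Perm (Fin i), ∑ ρ : Fin i → Equiv.Perm (Fin m),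
          ((((∏ b, Equiv.Perm.sign (μ b) : ℤˣ) : ℤ)) : ℂ) *
            symPowCoef i m (idx ∘ ⇑(colPerm μ * rowPerm ρ)))
      = ((m.factorial : ℂ))⁻¹ ^ i *
          ∑ P ∈ Finset.univ.filter (fun P : Fin m → Finset (Fin m) => IsPattern i P),
            (((Lpos i P : ℂ) - (Lneg i P : ℂ)) ^ 2) := by
  calc _ = ∑ idx : (Fin i × Fin m) → Fin m, symPowCoef i m idx *
        ∑ μ ∈ Finset.univ.filter (fun μ => ∀ p, Bijective (colPermute μ (curry idx) p)),
          (prodSign μ : ℂ) := by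
        refine Finset.sum_congr rfl fun idx _ => ?_
        simp only [← Finset.mul_sum, sum_symPowCoef_comp_colPerm_mul_rowPerm, mul_boole,
          Finset.sum_filter, prodSign_apply]
    _ = ((m.factorial : ℂ))⁻¹ ^ i *
        ∑ A ∈ Finset.univ.filter (fun A : Fin i → Fin m → Fin m => ∀ p, Bijective (A p)),
          ∑ μ ∈ Finset.univ.filter (fun μ => ∀ p, Bijective (colPermute μ A p)),
            (prodSign μ : ℂ) := by
        simp only [symPowCoef_eq, mul_assoc, ← Finset.mul_sum, boole_mul, ← Finset.sum_filter]
        exact congrArg _ (Finset.sum_equiv (Equiv.curry _ _ _) (by simp) fun _ _ => rfl)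
    _ = _ := by
        congr 1
        have hcore := congrArg (Int.cast : ℤ → ℂ)
          (sum_sum_prodSign_colPermute_eq_sum_sq (i := i) (m := m))
        push_cast [signedLatinCount_eq_sub] at hcore
        exact hcore

open scoped Classical in
/-- `⟨v_o^{⊗i}, S(B_o)·𝔳_o^{⊗i}⟩ = (1/m!)^i ∑_{𝒜 ∈ S(i,m)} (#L^+_𝒜 − #L^−_𝒜)²`:
the pairing of `v_o^{⊗i}` with the image of `𝔳_o^{⊗i}` under the Young symmetrizer
`S(B_o) = (∑_{μ ∈ Col(B_o)} sgn(μ) μ)·(∑_{σ ∈ Row(B_o)} σ)` of the rectangular tableau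
`B_o`, computed in coordinates, equals `(1/m!)^i` times the sum over all patterns `𝒜` of
size `(i,m)` of the square of the difference between the numbers of column-even and
column-odd Latin `(i,m)`-rectangles with pattern `𝒜`. -/
theorem pairing_youngSymmetrizer_eq_latin_sum (i m : ℕ)
    (heven : Even m) (hi1 : 1 ≤ i) (him : i ≤ m) :
    ∑ idx : (Fin i × Fin m) → Fin m, symPowCoef i m idx *
        (∑ μ : Fin m → Equiv.Perm (Fin i), ∑ ρ : Fin i → Equiv.Perm (Fin m),
          ((((∏ b, Equiv.Perm.sign (μ b) : ℤˣ) : ℤ)) : ℂ) *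
            symPowCoef i m (idx ∘ ⇑(colPerm μ * rowPerm ρ)))
      = ((m.factorial : ℂ))⁻¹ ^ i *
          ∑ P ∈ Finset.univ.filter (fun P : Fin m → Finset (Fin m) => IsPattern i P),
            (((Lpos i P : ℂ) - (Lneg i P : ℂ)) ^ 2) :=
  pairing_youngSymmetrizer_eq_latin_sum_general i m
end

section
/- With notation as in the pairing formula for the Young symmetrizer (i = m case): ⟨v_o^{⊗m}, S(B_o)·v_{B_o}⟩ = #CELS(m) − #COLS(m), i.e., the pairing of the m-fold tensor power of the symmetrized dual basis vector with the Young-symmetrized tableau vector for the square tableau of shape (m^m) equals the number of column-even Latin (m,m)-squares minus the number of column-odd ones. Equivalently, ∑ ε(μ_1)···ε(μ_m), summed over m-tuples (μ_1,...,μ_m) ∈ S_m^m such that the matrix (μ_q(p))_{p,q} is a Latin square, equals #CELS(m) − #COLS(m). -/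
open Finset

/-- The number of column-even Latin `(m,m)`-squares. -/
noncomputable def CELS (m : ℕ) : ℕ :=
  Nat.card {A : Fin m → Fin m → Fin m // IsLatinRect A ∧ colSign A = 1}

/-- The number of column-odd Latin `(m,m)`-squares. -/
noncomputable def COLS (m : ℕ) : ℕ :=
  Nat.card {A : Fin m → Fin m → Fin m // IsLatinRect A ∧ colSign A = -1}

/-! The column sign of `B(μ)` is a product of Vandermonde-type discriminants, the `q`-th of
which has the sign of `μ_q`; so summing `∏ sgn μ_q` over the tuples making `B(μ)` Latin is
summing the column sign over Latin squares, and the column sign of a Latin square is `±1`. -/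

-- The product is the Vandermonde determinant of `f ∘ σ`, that is `sgn σ` times the positive
-- Vandermonde determinant of `f`.
theorem sign_prod_sub_perm {n : ℕ} {f : Fin n → ℤ} (hf : StrictMono f) (σ : Equiv.Perm (Fin n)) :
    Int.sign (∏ p : Fin n, ∏ p' ∈ univ.filter (fun p' => p < p'), (f (σ p') - f (σ p))) =
      Equiv.Perm.sign σ := by
  have hIoi : ∀ p : Fin n, univ.filter (fun p' => p < p') = Ioi p := fun p => by ext; simp
  have hpos : 0 < (Matrix.vandermonde f).det := by
    rw [Matrix.det_vandermonde]
    exact prod_pos fun p _ => prod_pos fun p' hp' => sub_pos.mpr (hf (mem_Ioi.mp hp'))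
  have hperm : (Matrix.vandermonde (f ∘ σ)).det = Equiv.Perm.sign σ * (Matrix.vandermonde f).det :=
    Matrix.det_permute σ (Matrix.vandermonde f)
  simp_rw [hIoi, ← Function.comp_apply (f := f), ← Matrix.det_vandermonde, hperm, Int.sign_mul,
    Int.sign_eq_one_of_pos hpos, mul_one]
  rcases Int.units_eq_one_or (Equiv.Perm.sign σ) with h | h <;> simp [h]

theorem colSign_of_perms {m : ℕ} (μ : Fin m → Equiv.Perm (Fin m)) :
    colSign (fun p q => μ q p) = ((∏ q, Equiv.Perm.sign (μ q) : ℤˣ) : ℤ) := by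
  rw [colSign, Units.coe_prod]
  exact prod_congr rfl fun q _ => sign_prod_sub_perm (f := fun p => (p : ℤ))
    (fun _ _ h => by simpa using h) (μ q)

theorem sum_perms_rowBijective_eq_sum_isLatinRect {M : Type*} [AddCommMonoid M] {m : ℕ}
    [DecidablePred fun μ : Fin m → Equiv.Perm (Fin m) => ∀ p, Function.Bijective fun q => μ q p]
    [DecidablePred (IsLatinRect (i := m) (m := m))] (g : (Fin m → Fin m → Fin m) → M) :
    ∑ μ ∈ univ.filter (fun μ : Fin m → Equiv.Perm (Fin m) =>
        ∀ p, Function.Bijective fun q => μ q p), g (fun p q => μ q p) =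
      ∑ A ∈ univ.filter IsLatinRect, g A := by
  have hcol : ∀ A ∈ univ.filter IsLatinRect, ∀ q : Fin m, Function.Bijective fun p => A p q :=
    fun A hA q => Finite.injective_iff_bijective.mp ((mem_filter.mp hA).2.2 q)
  refine sum_bij' (fun μ _ p q => μ q p) (fun A hA q => Equiv.ofBijective _ (hcol A hA q))
    (fun μ hμ => ?_) (fun A hA => ?_) (fun _ _ => funext fun _ => Equiv.ext fun _ => rfl)
    (fun _ _ => rfl) (fun _ _ => rfl)
  · exact mem_filter.mpr ⟨mem_univ _, (mem_filter.mp hμ).2, fun q => (μ q).injective⟩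
  · exact mem_filter.mpr ⟨mem_univ _, (mem_filter.mp hA).2.1⟩

theorem Finset.sum_eq_card_sub_card_of_eq_one_or_neg_one {α : Type*} (s : Finset α) (f : α → ℤ)
    (hf : ∀ x ∈ s, f x = 1 ∨ f x = -1) :
    ∑ x ∈ s, f x = #(s.filter (f · = 1)) - #(s.filter (f · = -1)) := by
  have hneg : s.filter (¬f · = 1) = s.filter (f · = -1) :=
    filter_congr fun x hx => by rcases hf x hx with h | h <;> simp [h]
  rw [← sum_filter_add_sum_filter_not s (f · = 1), hneg,
    sum_congr rfl fun x hx => (mem_filter.mp hx).2, sum_congr rfl fun x hx => (mem_filter.mp hx).2]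
  simp [sub_eq_add_neg]

open scoped Classical in
/-- `⟨v_o^{⊗m}, S(B_o)·v_{B_o}⟩ = #CELS(m) − #COLS(m)`, in its equivalent combinatorial
form: the sum of `ε(μ_1) ⋯ ε(μ_m)` over the `m`-tuples `(μ_1,...,μ_m) ∈ S_m^m` such that
the matrix `(μ_q(p))_{p,q}` is a Latin square (its columns are automatically permutations
of `[m]`, so this says each row is one too) equals the number of column-even Latin
`(m,m)`-squares minus the number of column-odd ones. -/
theorem signed_count_latin_squares (m : ℕ) :
    ∑ μ ∈ Finset.univ.filter
        (fun μ : Fin m → Equiv.Perm (Fin m) =>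
          ∀ p : Fin m, Function.Bijective fun q => μ q p),
      ((∏ q, Equiv.Perm.sign (μ q) : ℤˣ) : ℤ)
      = (CELS m : ℤ) - (COLS m : ℤ) := by
  calc _ = ∑ μ ∈ univ.filter (fun μ : Fin m → Equiv.Perm (Fin m) =>
          ∀ p, Function.Bijective fun q => μ q p), colSign (fun p q => μ q p) :=
        sum_congr rfl fun μ _ => (colSign_of_perms μ).symm
    _ = ∑ A ∈ univ.filter IsLatinRect, colSign A := sum_perms_rowBijective_eq_sum_isLatinRect _
    _ = #((univ.filter IsLatinRect).filter (colSign · = 1)) -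
          #((univ.filter IsLatinRect).filter (colSign · = -1)) :=
        sum_eq_card_sub_card_of_eq_one_or_neg_one _ _ fun A hA =>
          colSign_eq_one_or_neg_one (mem_filter.mp hA).2.2
    _ = (CELS m : ℤ) - (COLS m : ℤ) := by
        simp only [CELS, COLS, Nat.card_eq_fintype_card, Fintype.card_subtype, filter_filter]
end
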